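/- arXiv:1908.11621 — 4 statements merged into one kernel-verified Lean document; each statement's English description precedes it below -/
import Mathlib

section
/- Let s and t be two distinct vertices of a graph G (possibly adjacent). Then the minimum cardinality of an s-t disconnecting pair equals the maximum number of internally disjoint s-t paths in G. -/
/-- A multigraph on vertex type `V` with edges drawn from `E`: each edge `e` in the
edge set joins the two (distinct) vertices of `ends e`.  Parallel edges are allowed,
loops are not. -/
structure Multigraph (V : Type) (E : Type) where
  edgeSet : Set E
  ends : E → Sym2 V
  no_loops : ∀ e ∈ edgeSet, ¬ (ends e).IsDiag

namespace Multigraph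

variable {V E : Type}

/-- Walks in a multigraph. -/
inductive Walk (G : Multigraph V E) : V → V → Type
  | nil (v : V) : Walk G v v
  | cons {u v w : V} (e : E) (he : e ∈ G.edgeSet) (huv : G.ends e = s(u, v))
      (p : Walk G v w) : Walk G u w

namespace Walk

variable {G : Multigraph V E}

/-- The list of vertices visited by a walk. -/
def support : {u v : V} → G.Walk u v → List V
  | u, _, .nil _ => [u]
  | u, _, .cons _ _ _ p => u :: p.support

/-- The list of edges used by a walk. -/
def edges : {u v : V} → G.Walk u v → List E
  | _, _, .nil _ => []
  | _, _, .cons e _ _ p => e :: p.edges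

/-- A walk is a path if it visits no vertex twice. -/
def IsPath {u v : V} (p : G.Walk u v) : Prop := p.support.Nodup

end Walk

/-- Two walks are edge-disjoint if they share no edge. -/
def EdgeDisjoint {G : Multigraph V E} {u₁ v₁ u₂ v₂ : V}
    (p : G.Walk u₁ v₁) (q : G.Walk u₂ v₂) : Prop :=
  ∀ e, e ∈ p.edges → e ∉ q.edges

/-- Two `s`-`t` walks are internally disjoint if they share no vertices other
than `s` and `t`. -/
def InternallyDisjoint {G : Multigraph V E} {s t : V}
    (p q : G.Walk s t) : Prop :=
  ∀ v, v ∈ p.support → v ∈ q.support → v = s ∨ v = t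


/-- `(W, F)` is an `s`-`t` disconnecting pair: `W` is a set of vertices avoiding `s`
and `t`, `F` is a set of edges of `G`, and `G - W - F` contains no `s`-`t` path. -/
def DisconnectingPair (G : Multigraph V E) (s t : V) (W : Finset V) (F : Finset E) : Prop :=
  (↑W : Set V) ⊆ ({s, t} : Set V)ᶜ ∧ (↑F : Set E) ⊆ G.edgeSet ∧
    ∀ p : G.Walk s t, (∃ x ∈ p.support, x ∈ W) ∨ ∃ e ∈ p.edges, e ∈ F

/-- `(k, l)` is a connectivity pair for `s` and `t` in `G`: there is an `s`-`t`
disconnecting pair of order `k` and size `l`, but none of cardinality less than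
`k + l` having order at most `k` and size at most `l`. -/
def ConnectivityPair (G : Multigraph V E) (s t : V) (k l : ℕ) : Prop :=
  (∃ (W : Finset V) (F : Finset E), G.DisconnectingPair s t W F ∧ W.card = k ∧ F.card = l) ∧
    ¬ ∃ (W : Finset V) (F : Finset E), G.DisconnectingPair s t W F ∧
        W.card + F.card < k + l ∧ W.card ≤ k ∧ F.card ≤ l

end Multigraph


section MengerAux
set_option linter.unusedVariables false
set_option linter.unusedSectionVars false
namespace Multigraph

variable {V E : Type}

namespace Walk

variable {G : Multigraph V E}

@[simp] lemma support_nil (v : V) : (Walk.nil (G := G) v).support = [v] := rfl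
@[simp] lemma support_cons {u v w : V} (e : E) (he) (huv : G.ends e = s(u,v)) (p : G.Walk v w) :
    (Walk.cons e he huv p).support = u :: p.support := rfl
@[simp] lemma edges_nil (v : V) : (Walk.nil (G := G) v).edges = [] := rfl
@[simp] lemma edges_cons {u v w : V} (e : E) (he) (huv : G.ends e = s(u,v)) (p : G.Walk v w) :
    (Walk.cons e he huv p).edges = e :: p.edges := rfl

lemma start_mem_support : ∀ {u v : V} (p : G.Walk u v), u ∈ p.support
  | _, _, .nil _ => List.mem_singleton.2 rfl
  | _, _, .cons _ _ _ _ => List.mem_cons_self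

lemma end_mem_support : ∀ {u v : V} (p : G.Walk u v), v ∈ p.support
  | _, _, .nil _ => List.mem_singleton.2 rfl
  | _, _, .cons _ _ _ p => List.mem_cons_of_mem _ (end_mem_support p)

lemma support_eq_cons : ∀ {u v : V} (p : G.Walk u v), ∃ l, p.support = u :: l
  | _, _, .nil u => ⟨[], rfl⟩
  | _, _, .cons _ _ _ p => ⟨p.support, rfl⟩

lemma support_ne_nil {u v : V} (p : G.Walk u v) : p.support ≠ [] := by
  cases p <;> simp [support]

lemma edges_mem_edgeSet : ∀ {u v : V} (p : G.Walk u v) {e : E}, e ∈ p.edges → e ∈ G.edgeSet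
  | _, _, .cons e' he h p, e, hm => by
      rcases List.mem_cons.1 hm with h1 | h1
      · exact h1 ▸ he
      · exact edges_mem_edgeSet p h1

lemma mem_support_of_mem_ends :
    ∀ {u v : V} (p : G.Walk u v) {e : E}, e ∈ p.edges → ∀ {a : V}, a ∈ G.ends e → a ∈ p.support
  | _, _, .cons e' he h p, e, hm, a, ha => by
      rcases List.mem_cons.1 hm with h1 | h1
      · subst h1
        rw [h, Sym2.mem_iff] at ha
        rcases ha with rfl | rfl
        · exact List.mem_cons_self
        · exact List.mem_cons_of_mem _ (start_mem_support p)
      · exact List.mem_cons_of_mem _ (mem_support_of_mem_ends p h1 ha)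

/-- Change the starting point of a walk along an equality. -/
def castStart {u u' v : V} (h : u = u') (p : G.Walk u v) : G.Walk u' v := h ▸ p

@[simp] lemma support_castStart {u u' v : V} (h : u = u') (p : G.Walk u v) :
    (p.castStart h).support = p.support := by subst h; rfl

@[simp] lemma edges_castStart {u u' v : V} (h : u = u') (p : G.Walk u v) :
    (p.castStart h).edges = p.edges := by subst h; rfl

lemma isPath_castStart {u u' v : V} (h : u = u') {p : G.Walk u v} (hp : p.IsPath) :
    (p.castStart h).IsPath := by subst h; exact hp

def append : {u v w : V} → G.Walk u v → G.Walk v w → G.Walk u w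
  | _, _, _, .nil _, q => q
  | _, _, _, .cons e he h p, q => .cons e he h (append p q)

lemma support_append : ∀ {u v w : V} (p : G.Walk u v) (q : G.Walk v w),
    (p.append q).support = p.support ++ q.support.tail
  | _, _, _, .nil _, q => by
      cases q <;> simp [append, support]
  | _, _, _, .cons e he h p, q => by
      simp [append, support, support_append p q]

lemma edges_append : ∀ {u v w : V} (p : G.Walk u v) (q : G.Walk v w),
    (p.append q).edges = p.edges ++ q.edges
  | _, _, _, .nil _, q => rfl
  | _, _, _, .cons e he h p, q => by simp [append, edges, edges_append p q]

/-- Transfer a walk to another multigraph with the same `ends`,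
provided all its edges belong there. -/
def transfer {G₂ : Multigraph V E} (hends : G₂.ends = G.ends) :
    {u v : V} → (p : G.Walk u v) → (∀ e ∈ p.edges, e ∈ G₂.edgeSet) → G₂.Walk u v
  | _, _, .nil u, _ => .nil u
  | _, _, .cons e he h p, hE =>
      .cons e (hE e (List.mem_cons_self)) (hends ▸ h)
        (transfer hends p (fun f hf => hE f (List.mem_cons_of_mem _ hf)))

lemma support_transfer {G₂ : Multigraph V E} (hends : G₂.ends = G.ends) :
    ∀ {u v : V} (p : G.Walk u v) (hE), (p.transfer hends hE).support = p.support
  | _, _, .nil u, _ => rfl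
  | _, _, .cons e he h p, hE => by simp [transfer, support, support_transfer hends p]

lemma edges_transfer {G₂ : Multigraph V E} (hends : G₂.ends = G.ends) :
    ∀ {u v : V} (p : G.Walk u v) (hE), (p.transfer hends hE).edges = p.edges
  | _, _, .nil u, _ => rfl
  | _, _, .cons e he h p, hE => by simp [transfer, edges, edges_transfer hends p]


variable [DecidableEq V]

def dropUntil : {u v : V} → (p : G.Walk u v) → (w : V) → w ∈ p.support → G.Walk w v
  | u, _, .nil _, w, h =>
      Walk.castStart (show w = u by simpa [support] using (h : w ∈ [u])).symm (.nil u)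
  | u, v, .cons e he hx p, w, h =>
      if hw : w = u then Walk.castStart hw.symm (.cons e he hx p)
      else p.dropUntil w (by rcases List.mem_cons.1 h with h1 | h1; exact absurd h1 hw; exact h1)

lemma support_dropUntil_suffix :
    ∀ {u v : V} (p : G.Walk u v) (w : V) (h : w ∈ p.support),
      (p.dropUntil w h).support <:+ p.support
  | u, _, .nil _, w, h => by
      have hw : w = u := by simpa [support] using h
      subst hw
      simp [dropUntil]
  | u, v, .cons e he hx p, w, h => by
      rw [dropUntil]
      split
      · next hw => subst hw; simp
      · next hw =>
          exact (support_dropUntil_suffix p w _).trans (List.suffix_cons u p.support)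

lemma edges_dropUntil_subset :
    ∀ {u v : V} (p : G.Walk u v) (w : V) (h : w ∈ p.support) {e : E},
      e ∈ (p.dropUntil w h).edges → e ∈ p.edges
  | u, _, .nil _, w, h, e => by
      have hw : w = u := by simpa [support] using h
      subst hw
      simp [dropUntil]
  | u, v, .cons e' he hx p, w, h, e => by
      rw [dropUntil]
      split
      · next hw => subst hw; simp
      · next hw =>
          intro hm
          exact List.mem_cons_of_mem _ (edges_dropUntil_subset p w _ hm)

def bypass : {u v : V} → G.Walk u v → G.Walk u v
  | _, _, .nil u => .nil u
  | u, _, .cons e he hx p =>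
      if h : u ∈ p.bypass.support then p.bypass.dropUntil u h else .cons e he hx p.bypass

lemma bypass_isPath : ∀ {u v : V} (p : G.Walk u v), p.bypass.IsPath
  | _, _, .nil u => by simp [bypass, IsPath, support]
  | u, _, .cons e he hx p => by
      rw [bypass]
      split
      · next h => exact (bypass_isPath p).sublist (support_dropUntil_suffix _ _ _).sublist
      · next h =>
          have := bypass_isPath p
          simpa [IsPath, support] using ⟨h, this⟩

lemma support_bypass_subset : ∀ {u v : V} (p : G.Walk u v) {x : V},
    x ∈ p.bypass.support → x ∈ p.support
  | _, _, .nil u, x => by simp [bypass]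
  | u, _, .cons e he hx p, x => by
      rw [bypass]
      split
      · next h =>
          intro hm
          have := (support_dropUntil_suffix _ _ h).subset hm
          exact List.mem_cons_of_mem _ (support_bypass_subset p this)
      · next h =>
          intro hm
          rcases List.mem_cons.1 hm with h1 | h1
          · exact h1 ▸ List.mem_cons_self
          · exact List.mem_cons_of_mem _ (support_bypass_subset p h1)

lemma edges_bypass_subset : ∀ {u v : V} (p : G.Walk u v) {e : E},
    e ∈ p.bypass.edges → e ∈ p.edges
  | _, _, .nil u, x => by simp [bypass]
  | u, _, .cons e he hx p, x => by
      rw [bypass]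
      split
      · next h =>
          intro hm
          have := edges_dropUntil_subset _ _ h hm
          exact List.mem_cons_of_mem _ (edges_bypass_subset p this)
      · next h =>
          intro hm
          rcases List.mem_cons.1 hm with h1 | h1
          · exact h1 ▸ List.mem_cons_self
          · exact List.mem_cons_of_mem _ (edges_bypass_subset p h1)


lemma exists_firstHit {u v : V} (p : G.Walk u v) (X : Set V)
    (h : ∃ w ∈ p.support, w ∈ X) :
    ∃ (c : V) (q : G.Walk u c), c ∈ X ∧ q.support <+: p.support ∧
      (∀ e ∈ q.edges, e ∈ p.edges) ∧ ∀ w ∈ q.support, w ∈ X → w = c := by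
  classical
  induction p with
  | nil a =>
      obtain ⟨w, hw, hwX⟩ := h
      simp only [support_nil, List.mem_singleton] at hw
      subst hw
      exact ⟨w, .nil w, hwX, by simp, by simp, by simp⟩
  | cons e he hx p ih =>
      rename_i a b c'
      by_cases ha : a ∈ X
      · exact ⟨a, .nil a, ha, ⟨p.support, rfl⟩, by simp, by simp⟩
      · have h' : ∃ w ∈ p.support, w ∈ X := by
          obtain ⟨w, hw, hwX⟩ := h
          rcases List.mem_cons.1 hw with rfl | hw
          · exact absurd hwX ha
          · exact ⟨w, hw, hwX⟩
        obtain ⟨c, q, hcX, hpre, hedg, hlast⟩ := ih h'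
        refine ⟨c, .cons e he hx q, hcX, ?_, ?_, ?_⟩
        · obtain ⟨tl, htl⟩ := hpre
          exact ⟨tl, by simp [support, ← htl]⟩
        · intro f hf
          rcases List.mem_cons.1 hf with rfl | hf
          · exact List.mem_cons_self
          · exact List.mem_cons_of_mem _ (hedg f hf)
        · intro w hw hwX
          rcases List.mem_cons.1 hw with rfl | hw
          · exact absurd hwX ha
          · exact hlast w hw hwX

lemma exists_lastHit {u v : V} (p : G.Walk u v) (X : Set V)
    (h : ∃ w ∈ p.support, w ∈ X) :
    ∃ (c : V) (q : G.Walk c v), c ∈ X ∧ q.support <:+ p.support ∧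
      (∀ e ∈ q.edges, e ∈ p.edges) ∧ ∀ w ∈ q.support, w ∈ X → w = c := by
  classical
  induction p with
  | nil a =>
      obtain ⟨w, hw, hwX⟩ := h
      simp only [support_nil, List.mem_singleton] at hw
      subst hw
      exact ⟨w, .nil w, hwX, by simp, by simp, by simp⟩
  | cons e he hx p ih =>
      rename_i a b c'
      by_cases h' : ∃ w ∈ p.support, w ∈ X
      · obtain ⟨c, q, hcX, hsuf, hedg, hlast⟩ := ih h'
        refine ⟨c, q, hcX, hsuf.trans (List.suffix_cons a p.support), fun f hf => List.mem_cons_of_mem _ (hedg f hf), hlast⟩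
      · have haX : a ∈ X := by
          obtain ⟨w, hw, hwX⟩ := h
          rcases List.mem_cons.1 hw with rfl | hw
          · exact hwX
          · exact absurd ⟨w, hw, hwX⟩ h'
        refine ⟨a, .cons e he hx p, haX, List.suffix_refl _, fun f hf => hf, ?_⟩
        intro w hw hwX
        rcases List.mem_cons.1 hw with rfl | hw
        · rfl
        · exact absurd ⟨w, hw, hwX⟩ h'

lemma exists_split {u v : V} (p : G.Walk u v) {x : V} (hx : x ∈ p.support) :
    ∃ (q : G.Walk u x) (r : G.Walk x v),
      p.support = q.support ++ r.support.tail ∧ p.edges = q.edges ++ r.edges := by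
  classical
  induction p with
  | nil a =>
      simp only [support_nil, List.mem_singleton] at hx
      subst hx
      exact ⟨.nil _, .nil _, by simp [support], by simp⟩
  | cons e he hxe p ih =>
      rename_i a b c'
      by_cases hax : x = a
      · subst hax
        exact ⟨.nil x, .cons e he hxe p, by simp [support], by simp⟩
      · have hx' : x ∈ p.support := by
          rcases List.mem_cons.1 hx with h1 | h1
          · exact absurd h1 hax
          · exact h1
        obtain ⟨q, r, hs, hedg⟩ := ih hx'
        exact ⟨.cons e he hxe q, r, by simp [support, hs], by simp [hedg]⟩


omit [DecidableEq V]

lemma isPath_tail {u v w : V} {e : E} {he : e ∈ G.edgeSet} {hx : G.ends e = s(u,v)}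
    {p : G.Walk v w} (hp : (Walk.cons e he hx p).IsPath) : p.IsPath ∧ u ∉ p.support := by
  have := hp
  simp only [IsPath, support_cons, List.nodup_cons] at this
  exact ⟨this.2, this.1⟩

lemma eq_nil_of_isPath_self {v : V} (p : G.Walk v v) (hp : p.IsPath) : p = .nil v := by
  cases p with
  | nil => rfl
  | cons e he hx p' =>
      exfalso
      have h2 := end_mem_support p'
      simp only [IsPath, support_cons, List.nodup_cons] at hp
      exact hp.1 h2

lemma exists_cons_of_ne {u v : V} (huv : u ≠ v) (p : G.Walk u v) :
    ∃ (x : V) (e : E) (he : e ∈ G.edgeSet) (hx : G.ends e = s(u,x)) (q : G.Walk x v),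
      p = .cons e he hx q := by
  cases p with
  | nil => exact absurd rfl huv
  | cons e he hx q => exact ⟨_, e, he, hx, q, rfl⟩

end Walk

lemma ends_rep (z : Sym2 V) : ∃ a b, z = s(a, b) := by
  induction z using Sym2.ind with
  | _ a b => exact ⟨a, b, rfl⟩

lemma ne_of_ends {G : Multigraph V E} {e : E} (he : e ∈ G.edgeSet) {a b : V}
    (h : G.ends e = s(a, b)) : a ≠ b := by
  intro hab
  exact G.no_loops e he (by rw [h, hab]; exact Sym2.isDiag_iff_proj_eq |>.2 rfl)

lemma eq_single_of_mem_edges {G : Multigraph V E} {s t : V} (hst : s ≠ t)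
    (p : G.Walk s t) (hp : p.IsPath) {e : E} (hep : e ∈ p.edges)
    (hends : G.ends e = s(s, t)) :
    ∃ (h1 : e ∈ G.edgeSet), p = .cons e h1 hends (.nil t) := by
  cases p with
  | nil => simp [Walk.edges] at hep
  | cons e' he' hx' p' =>
      rcases List.mem_cons.1 hep with rfl | hmem
      · -- e is the first edge
        rename_i v'
        have hv : v' = t := by
          rw [hends] at hx'
          rcases Sym2.eq_iff.1 hx' with ⟨-, h2⟩ | ⟨-, h2⟩
          · exact h2.symm
          · exact absurd h2 (Ne.symm hst)
        subst hv
        have hnil : p' = .nil _ := Walk.eq_nil_of_isPath_self p' (Walk.isPath_tail hp).1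
        exact ⟨he', by rw [hnil]⟩
      · exfalso
        have hs : s ∈ p'.support := Walk.mem_support_of_mem_ends p' hmem
          (by rw [hends]; exact Sym2.mem_mk_left _ _)
        exact (Walk.isPath_tail hp).2 hs



lemma eq_of_shared_edge {G : Multigraph V E} {s t : V} (hst : s ≠ t)
    {p q : G.Walk s t} (hp : p.IsPath) (hq : q.IsPath)
    (hd : InternallyDisjoint p q) {e : E} (hep : e ∈ p.edges) (heq : e ∈ q.edges) :
    p = q := by
  obtain ⟨a, b, hab⟩ := ends_rep (G.ends e)
  have hne : a ≠ b := ne_of_ends (Walk.edges_mem_edgeSet p hep) hab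
  have haP : a ∈ p.support := Walk.mem_support_of_mem_ends p hep (by rw [hab]; exact Sym2.mem_mk_left _ _)
  have hbP : b ∈ p.support := Walk.mem_support_of_mem_ends p hep (by rw [hab]; exact Sym2.mem_mk_right _ _)
  have haQ : a ∈ q.support := Walk.mem_support_of_mem_ends q heq (by rw [hab]; exact Sym2.mem_mk_left _ _)
  have hbQ : b ∈ q.support := Walk.mem_support_of_mem_ends q heq (by rw [hab]; exact Sym2.mem_mk_right _ _)
  have hends : G.ends e = s(s, t) := by
    rcases hd a haP haQ with rfl | rfl <;> rcases hd b hbP hbQ with rfl | rfl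
    · exact absurd rfl hne
    · exact hab
    · rw [hab, Sym2.eq_swap]
    · exact absurd rfl hne
  obtain ⟨h1, hpe⟩ := eq_single_of_mem_edges hst p hp hep hends
  obtain ⟨h2, hqe⟩ := eq_single_of_mem_edges hst q hq heq hends
  rw [hpe, hqe]

namespace Walk

variable [DecidableEq V]

/-- Relabel vertices of a walk along `f`, mapping into a graph `G'` that contains every
non-collapsed edge of `G` with the corresponding ends. -/
def relabel {G G' : Multigraph V E} (f : V → V)
    (h : ∀ (e : E) (u v : V), e ∈ G.edgeSet → G.ends e = s(u, v) → f u ≠ f v →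
       e ∈ G'.edgeSet ∧ G'.ends e = s(f u, f v)) :
    {u v : V} → G.Walk u v → G'.Walk (f u) (f v)
  | _, _, .nil u => .nil (f u)
  | _, _, .cons (u := u) (v := v) e he huv p =>
      if hEq : f u = f v then castStart hEq.symm (relabel f h p)
      else .cons e (h e u v he huv hEq).1 (h e u v he huv hEq).2 (relabel f h p)

lemma support_relabel {G G' : Multigraph V E} (f : V → V) (h) :
    ∀ {u v : V} (p : G.Walk u v) {z : V}, z ∈ (relabel (G' := G') f h p).support →
      ∃ w ∈ p.support, f w = z
  | _, _, .nil u, z => by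
      intro hz
      simp only [relabel, support_nil, List.mem_singleton] at hz
      exact ⟨u, List.mem_singleton.2 rfl, hz.symm⟩
  | _, _, .cons (u := u) (v := v) e he huv p, z => by
      intro hz
      rw [relabel] at hz
      split at hz
      · next hEq =>
          rw [support_castStart] at hz
          obtain ⟨w, hw, hfw⟩ := support_relabel f h p hz
          exact ⟨w, List.mem_cons_of_mem _ hw, hfw⟩
      · next hEq =>
          rcases List.mem_cons.1 hz with rfl | hz
          · exact ⟨u, List.mem_cons_self, rfl⟩
          · obtain ⟨w, hw, hfw⟩ := support_relabel f h p hz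
            exact ⟨w, List.mem_cons_of_mem _ hw, hfw⟩

end Walk

/-- Delete an edge. -/
def delE (G : Multigraph V E) (e : E) : Multigraph V E :=
  ⟨G.edgeSet \ {e}, G.ends, fun f hf => G.no_loops f hf.1⟩

variable [DecidableEq V]

/-- The collapse map sending `y` to `x`. -/
def collapse (x y : V) : V → V := fun z => if z = y then x else z

@[simp] lemma collapse_x {x y : V} : collapse x y x = x := by
  unfold collapse; split <;> rfl

@[simp] lemma collapse_y {x y : V} : collapse x y y = x := by simp [collapse]

lemma collapse_eq_cases {x y a c : V} (h : collapse x y a = collapse x y c) :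
    a = c ∨ (a = x ∧ c = y) ∨ (a = y ∧ c = x) := by
  unfold collapse at h
  split_ifs at h <;> subst_vars <;> tauto

/-- Contract `y` onto `x`. -/
def contr (G : Multigraph V E) (x y : V) : Multigraph V E :=
  ⟨{f | f ∈ G.edgeSet ∧ ¬ (Sym2.map (collapse x y) (G.ends f)).IsDiag},
   fun f => Sym2.map (collapse x y) (G.ends f), fun f hf => hf.2⟩

lemma contr_hyp (G : Multigraph V E) (x y : V) :
    ∀ (e : E) (u v : V), e ∈ G.edgeSet → G.ends e = s(u, v) →
      collapse x y u ≠ collapse x y v →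
      e ∈ (G.contr x y).edgeSet ∧ (G.contr x y).ends e = s(collapse x y u, collapse x y v) := by
  intro e u v he hends hne
  constructor
  · refine ⟨he, ?_⟩
    rw [hends, Sym2.map_pair_eq, Sym2.isDiag_iff_proj_eq]
    exact hne
  · show Sym2.map (collapse x y) (G.ends e) = _
    rw [hends, Sym2.map_pair_eq]

lemma walk_of_collapse_eq {G : Multigraph V E} {x y : V} {e : E} (he : e ∈ G.edgeSet)
    (hends : G.ends e = s(x, y)) {a c : V} (h : collapse x y a = collapse x y c) :
    ∃ w : G.Walk a c, ∀ v ∈ w.support, v = a ∨ v = c := by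
  rcases collapse_eq_cases h with rfl | ⟨hax, hcy⟩ | ⟨hay, hcx⟩
  · exact ⟨.nil a, by simp [Walk.support]⟩
  · exact ⟨.cons e he (by rw [hax, hcy]; exact hends) (.nil c), by
      intro v hv
      rcases List.mem_cons.1 hv with rfl | hv
      · exact Or.inl rfl
      · simp only [Walk.support_nil, List.mem_singleton] at hv; exact Or.inr hv⟩
  · exact ⟨.cons e he (by rw [hay, hcx, Sym2.eq_swap]; exact hends) (.nil c), by
      intro v hv
      rcases List.mem_cons.1 hv with rfl | hv
      · exact Or.inl rfl
      · simp only [Walk.support_nil, List.mem_singleton] at hv; exact Or.inr hv⟩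

/-- Lift a walk in the contraction back to the original graph, with prescribed endpoints. -/
lemma lift_contr {G : Multigraph V E} {x y : V} {e : E} (he : e ∈ G.edgeSet)
    (hends : G.ends e = s(x, y)) :
    ∀ {a' b' : V} (p' : (G.contr x y).Walk a' b') (a b : V),
      collapse x y a = a' → collapse x y b = b' →
      ∃ q : G.Walk a b, ∀ v ∈ q.support, collapse x y v ∈ p'.support := by
  intro a' b' p'
  induction p' with
  | nil c =>
      intro a b ha hb
      obtain ⟨w, hw⟩ := walk_of_collapse_eq he hends (ha.trans hb.symm)
      refine ⟨w, ?_⟩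
      intro v hv
      rcases hw v hv with rfl | rfl
      · rw [ha]; exact List.mem_singleton.2 rfl
      · rw [hb]; exact List.mem_singleton.2 rfl
  | cons f hf huv r ih =>
      rename_i a' c' b'
      intro a b ha hb
      obtain ⟨u₀, v₀, hf0⟩ := ends_rep (G.ends f)
      have hmap : s(collapse x y u₀, collapse x y v₀) = s(a', c') := by
        have : (G.contr x y).ends f = Sym2.map (collapse x y) (G.ends f) := rfl
        rw [huv, hf0, Sym2.map_pair_eq] at this
        exact this.symm
      have key : ∃ u₁ v₁, G.ends f = s(u₁, v₁) ∧ collapse x y u₁ = a' ∧ collapse x y v₁ = c' := by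
        rcases Sym2.eq_iff.1 hmap with ⟨h1, h2⟩ | ⟨h1, h2⟩
        · exact ⟨u₀, v₀, hf0, h1, h2⟩
        · exact ⟨v₀, u₀, by rw [hf0, Sym2.eq_swap], h2, h1⟩
      obtain ⟨u₁, v₁, hf1, hu₁, hv₁⟩ := key
      obtain ⟨q', hq'⟩ := ih v₁ b hv₁ hb
      obtain ⟨w, hw⟩ := walk_of_collapse_eq he hends (ha.trans hu₁.symm)
      refine ⟨w.append (.cons f hf.1 hf1 q'), ?_⟩
      intro v hv
      rw [Walk.support_append] at hv
      rcases List.mem_append.1 hv with hv | hv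
      · rcases hw v hv with rfl | rfl
        · rw [ha]; exact List.mem_cons_self
        · rw [hu₁]; exact List.mem_cons_self
      · have hv2 : v ∈ q'.support := by simpa [Walk.support] using hv
        exact List.mem_cons_of_mem _ (hq' v hv2)

variable [Fintype V] [Fintype E]

/-- `S` separates `A` from `B` in `G`: every `A`–`B` walk meets `S`. -/
def Sep (G : Multigraph V E) (A B : Set V) (S : Finset V) : Prop :=
  ∀ ⦃a b : V⦄ (p : G.Walk a b), a ∈ A → b ∈ B → ∃ v ∈ p.support, v ∈ S

/-- A path from `A` to `B`. -/
structure ABPath (G : Multigraph V E) (A B : Set V) where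
  {a : V}
  {b : V}
  walk : G.Walk a b
  ha : a ∈ A
  hb : b ∈ B
  hpath : walk.IsPath

/-- There are `k` pairwise (fully) disjoint `A`–`B` paths. -/
def DisjPaths (G : Multigraph V E) (A B : Set V) (k : ℕ) : Prop :=
  ∃ f : Fin k → ABPath G A B, ∀ i j : Fin k, i ≠ j → ∀ v,
    v ∈ (f i).walk.support → v ∉ (f j).walk.support

noncomputable def esize (G : Multigraph V E) : ℕ := (Set.toFinite G.edgeSet).toFinset.card

lemma esize_lt {G₂ G : Multigraph V E} (h : G₂.edgeSet ⊆ G.edgeSet) {e : E}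
    (heG : e ∈ G.edgeSet) (heG₂ : e ∉ G₂.edgeSet) : esize G₂ < esize G := by
  apply Finset.card_lt_card
  rw [Set.Finite.toFinset_ssubset_toFinset]
  exact ⟨h, fun hsub => heG₂ (hsub heG)⟩

lemma core_base {G : Multigraph V E} (hE : ∀ e, e ∉ G.edgeSet) (A B : Set V) (k : ℕ)
    (hk : ∀ S : Finset V, Sep G A B S → k ≤ S.card) : DisjPaths G A B k := by
  classical
  set S₀ : Finset V := (Set.toFinite (A ∩ B)).toFinset with hS₀
  have hsep : Sep G A B S₀ := by
    intro a b p ha hb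
    cases p with
    | nil => exact ⟨a, List.mem_singleton.2 rfl, by simp [hS₀, Set.Finite.mem_toFinset]; exact ⟨ha, hb⟩⟩
    | cons e he hx p => exact absurd he (hE e)
  obtain ⟨T, hTsub, hTcard⟩ := Finset.exists_subset_card_eq (hk S₀ hsep)
  set g : Fin k → V := fun i => (T.equivFin.symm (Fin.cast hTcard.symm i)).1 with hg
  have hginj : Function.Injective g := by
    intro i j hij
    have := Subtype.ext hij
    simpa using congrArg (Fin.cast hTcard) (T.equivFin.symm.injective this)
  have hgmem : ∀ i, g i ∈ A ∩ B := by
    intro i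
    have : g i ∈ T := (T.equivFin.symm (Fin.cast hTcard.symm i)).2
    have := hTsub this
    rwa [Set.Finite.mem_toFinset] at this
  refine ⟨fun i => ⟨Walk.nil (g i), (hgmem i).1, (hgmem i).2, by simp [Walk.IsPath, Walk.support]⟩, ?_⟩
  intro i j hij v hvi hvj
  simp only [Walk.support_nil, List.mem_singleton] at hvi hvj
  exact hij (hginj (hvi ▸ hvj ▸ rfl))

theorem core (n : ℕ) : ∀ (G : Multigraph V E), esize G ≤ n → ∀ (A B : Set V) (k : ℕ),
    (∀ S : Finset V, Sep G A B S → k ≤ S.card) → DisjPaths G A B k := by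
  induction n with
  | zero =>
      intro G hG A B k hk
      refine core_base ?_ A B k hk
      intro e he
      have : e ∈ (Set.toFinite G.edgeSet).toFinset := (Set.Finite.mem_toFinset _).2 he
      simp [esize, Nat.le_zero] at hG
      rw [hG] at he
      exact he
  | succ n ih =>
      intro G hG A B k hk
      by_cases hedge : ∃ e, e ∈ G.edgeSet
      case neg =>
        push_neg at hedge
        exact core_base hedge A B k hk
      obtain ⟨e, he⟩ := hedge
      obtain ⟨x, y, hends⟩ := ends_rep (G.ends e)
      have hxy : x ≠ y := ne_of_ends he hends
      set m := collapse x y with hm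
      set G' := G.contr x y with hG'def
      have heG' : e ∉ G'.edgeSet := by
        intro hc
        apply hc.2
        show (Sym2.map m (G.ends e)).IsDiag
        rw [hends, Sym2.map_pair_eq]
        simp [hm, Sym2.isDiag_iff_proj_eq]
      have hG'size : esize G' ≤ n :=
        Nat.lt_succ_iff.1 (lt_of_lt_of_le (esize_lt (fun f hf => hf.1) he heG') hG)
      have hGesize : esize (delE G e) ≤ n :=
        Nat.lt_succ_iff.1 (lt_of_lt_of_le
          (esize_lt (fun f hf => hf.1) he (fun hc => hc.2 rfl)) hG)
      by_cases hcase : ∀ S' : Finset V, Sep G' (m '' A) (m '' B) S' → k ≤ S'.card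
      · -- contraction still has no small separator: lift paths
        obtain ⟨f, hdisj⟩ := ih G' hG'size (m '' A) (m '' B) k hcase
        have hA := fun i : Fin k => (f i).ha
        have hB := fun i : Fin k => (f i).hb
        choose aa haA haEq using fun i : Fin k => hA i
        choose bb hbB hbEq using fun i : Fin k => hB i
        have hlift := fun i : Fin k =>
          lift_contr he hends (f i).walk (aa i) (bb i) (haEq i) (hbEq i)
        choose q hq using hlift
        refine ⟨fun i => ⟨(q i).bypass, haA i, hbB i, Walk.bypass_isPath _⟩, ?_⟩
        intro i j hij v hvi hvj
        have h1 : m v ∈ (f i).walk.support := hq i v (Walk.support_bypass_subset _ hvi)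
        have h2 : m v ∈ (f j).walk.support := hq j v (Walk.support_bypass_subset _ hvj)
        exact hdisj i j hij (m v) h1 h2
      · -- there is a small separator in the contraction
        push_neg at hcase
        obtain ⟨S', hS'sep, hS'card⟩ := hcase
        have lift_hit : ∀ {a b : V} (p : G.Walk a b), a ∈ A → b ∈ B →
            ∃ w ∈ p.support, m w ∈ S' := by
          intro a b p ha hb
          obtain ⟨v', hv', hv'S⟩ := hS'sep (Walk.relabel (G' := G') m (contr_hyp G x y) p)
            (Set.mem_image_of_mem m ha) (Set.mem_image_of_mem m hb)
          obtain ⟨w, hw, hfw⟩ := Walk.support_relabel m _ p hv'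
          exact ⟨w, hw, hfw ▸ hv'S⟩
        have hxS' : x ∈ S' := by
          by_contra hx
          have hsep : Sep G A B S' := by
            intro a b p ha hb
            obtain ⟨w, hw, hwS⟩ := lift_hit p ha hb
            have hwy : w ≠ y := by
              intro h
              apply hx
              have hmx : m w = x := by rw [hm, h]; exact collapse_y
              rwa [hmx] at hwS
            have hmw : m w = w := by simp [hm, collapse, hwy]
            exact ⟨w, hw, by rwa [hmw] at hwS⟩
          exact absurd (hk S' hsep) (not_le.2 hS'card)
        set X : Finset V := insert y S' with hX
        have hyX : y ∈ X := Finset.mem_insert_self y S'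
        have hxX : x ∈ X := Finset.mem_insert_of_mem hxS'
        have hXsep : Sep G A B X := by
          intro a b p ha hb
          obtain ⟨w, hw, hwS⟩ := lift_hit p ha hb
          by_cases hwy : w = y
          · exact ⟨w, hw, hwy ▸ hyX⟩
          · have hmw : m w = w := by simp [hm, collapse, hwy]
            exact ⟨w, hw, Finset.mem_insert_of_mem (by rwa [hmw] at hwS)⟩
        have hXcard : X.card = k := by
          refine le_antisymm ?_ (hk X hXsep)
          calc X.card ≤ S'.card + 1 := Finset.card_insert_le _ _
          _ ≤ k := Nat.succ_le_of_lt hS'card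
        -- separators between A and X in G - e are big
        have hsepA : ∀ T : Finset V, Sep (delE G e) A (↑X) T → k ≤ T.card := by
          intro T hT
          apply hk T
          intro a b p ha hb
          obtain ⟨v0, hv0, hv0X⟩ := hXsep p ha hb
          obtain ⟨c, qx, hcX, hpre, hedg, hfirst⟩ :=
            Walk.exists_firstHit p (↑X : Set V) ⟨v0, hv0, by exact_mod_cast hv0X⟩
          have henotin : e ∉ qx.edges := by
            intro hmem
            have hxs : x ∈ qx.support := Walk.mem_support_of_mem_ends qx hmem
              (by rw [hends]; exact Sym2.mem_mk_left _ _)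
            have hys : y ∈ qx.support := Walk.mem_support_of_mem_ends qx hmem
              (by rw [hends]; exact Sym2.mem_mk_right _ _)
            have h1 := hfirst x hxs (by exact_mod_cast hxX)
            have h2 := hfirst y hys (by exact_mod_cast hyX)
            exact hxy (h1.trans h2.symm)
          have hq' : ∀ f ∈ qx.edges, f ∈ (delE G e).edgeSet := fun f hf =>
            ⟨Walk.edges_mem_edgeSet qx hf, fun hfe => henotin (hfe ▸ hf)⟩
          obtain ⟨v, hv, hvT⟩ := hT (Walk.transfer (G := G) (G₂ := G.delE e) rfl qx hq') ha hcX
          have hv := (congrArg (v ∈ ·) (Walk.support_transfer (G := G) (G₂ := G.delE e) rfl qx hq')).mp hv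
          exact ⟨v, hpre.sublist.subset hv, hvT⟩
        have hsepB : ∀ T : Finset V, Sep (delE G e) (↑X) B T → k ≤ T.card := by
          intro T hT
          apply hk T
          intro a b p ha hb
          obtain ⟨v0, hv0, hv0X⟩ := hXsep p ha hb
          obtain ⟨c, qx, hcX, hsuf, hedg, hlast⟩ :=
            Walk.exists_lastHit p (↑X : Set V) ⟨v0, hv0, by exact_mod_cast hv0X⟩
          have henotin : e ∉ qx.edges := by
            intro hmem
            have hxs : x ∈ qx.support := Walk.mem_support_of_mem_ends qx hmem
              (by rw [hends]; exact Sym2.mem_mk_left _ _)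
            have hys : y ∈ qx.support := Walk.mem_support_of_mem_ends qx hmem
              (by rw [hends]; exact Sym2.mem_mk_right _ _)
            have h1 := hlast x hxs (by exact_mod_cast hxX)
            have h2 := hlast y hys (by exact_mod_cast hyX)
            exact hxy (h1.trans h2.symm)
          have hq' : ∀ f ∈ qx.edges, f ∈ (delE G e).edgeSet := fun f hf =>
            ⟨Walk.edges_mem_edgeSet qx hf, fun hfe => henotin (hfe ▸ hf)⟩
          obtain ⟨v, hv, hvT⟩ := hT (Walk.transfer (G := G) (G₂ := G.delE e) rfl qx hq') hcX hb
          have hv := (congrArg (v ∈ ·) (Walk.support_transfer (G := G) (G₂ := G.delE e) rfl qx hq')).mp hv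
          exact ⟨v, hsuf.sublist.subset hv, hvT⟩
        obtain ⟨fP, hdisjP⟩ := ih (delE G e) hGesize A (↑X) k hsepA
        obtain ⟨fQ, hdisjQ⟩ := ih (delE G e) hGesize (↑X) B k hsepB
        -- truncate the A-side paths at their first X-vertex
        have hPfh := fun i : Fin k => Walk.exists_firstHit (fP i).walk (↑X : Set V)
          ⟨(fP i).b, Walk.end_mem_support _, (fP i).hb⟩
        choose c' P' hc'X hpreP hedgP hfirstP using hPfh
        have hQlh := fun j : Fin k => Walk.exists_lastHit (fQ j).walk (↑X : Set V)
          ⟨(fQ j).a, Walk.start_mem_support _, (fQ j).ha⟩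
        choose d' Q' hd'X hsufQ hedgQ hlastQ using hQlh
        have hP'path : ∀ i, (P' i).IsPath := fun i => (fP i).hpath.sublist (hpreP i).sublist
        have hQ'path : ∀ j, (Q' j).IsPath := fun j => (fQ j).hpath.sublist (hsufQ j).sublist
        have hsubP : ∀ i, ∀ v ∈ (P' i).support, v ∈ (fP i).walk.support :=
          fun i v h => (hpreP i).sublist.subset h
        have hsubQ : ∀ j, ∀ v ∈ (Q' j).support, v ∈ (fQ j).walk.support :=
          fun j v h => (hsufQ j).sublist.subset h
        have hc'inj : Function.Injective c' := by
          intro i j hij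
          by_contra hne
          have h2 : c' i ∈ (P' j).support := by
            rw [hij]; exact Walk.end_mem_support _
          exact hdisjP i j hne (c' i) (hsubP i _ (Walk.end_mem_support _)) (hsubP j _ h2)
        have hd'inj : Function.Injective d' := by
          intro i j hij
          by_contra hne
          have h2 : d' i ∈ (Q' j).support := by
            rw [hij]; exact Walk.start_mem_support _
          exact hdisjQ i j hne (d' i) (hsubQ i _ (Walk.start_mem_support _)) (hsubQ j _ h2)
        have hcXm : ∀ i, c' i ∈ X := fun i => by exact_mod_cast hc'X i
        have hdXm : ∀ j, d' j ∈ X := fun j => by exact_mod_cast hd'X j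
        set cH : Fin k → {v // v ∈ X} := fun i => ⟨c' i, hcXm i⟩ with hcH
        set dH : Fin k → {v // v ∈ X} := fun j => ⟨d' j, hdXm j⟩ with hdH
        have hbijD : Function.Bijective dH := by
          refine (Fintype.bijective_iff_injective_and_card dH).2 ⟨?_, ?_⟩
          · intro i j hij
            exact hd'inj (congrArg Subtype.val hij)
          · simp [Fintype.card_coe, hXcard]
        set σ : Fin k → Fin k := fun i => (Equiv.ofBijective dH hbijD).symm (cH i) with hσ
        have hmatch : ∀ i, d' (σ i) = c' i := fun i =>
          congrArg Subtype.val ((Equiv.ofBijective dH hbijD).apply_symm_apply (cH i))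
        have hσinj : Function.Injective σ := by
          intro i j hij
          have : c' i = c' j := by rw [← hmatch i, ← hmatch j, hij]
          exact hc'inj this
        -- a common vertex of an A-side path and a B-side path lies in X
        have hcommon : ∀ i j v₀, v₀ ∈ (P' i).support → v₀ ∈ (Q' j).support →
            v₀ ∈ (↑X : Set V) := by
          intro i j v₀ hvP hvQ
          by_contra hvX
          obtain ⟨q₁, r₁, hs₁, he₁⟩ := Walk.exists_split (P' i) hvP
          obtain ⟨q₂, r₂, hs₂, he₂⟩ := Walk.exists_split (Q' j) hvQ
          obtain ⟨l₁, hl₁⟩ := Walk.support_eq_cons r₁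
          obtain ⟨l₂, hl₂⟩ := Walk.support_eq_cons r₂
          have htl₁ : r₁.support.tail = l₁ := by rw [hl₁]; rfl
          have htl₂ : r₂.support.tail = l₂ := by rw [hl₂]; rfl
          have hnodupP := hP'path i
          rw [Walk.IsPath, hs₁] at hnodupP
          have hdisj₁ := List.disjoint_of_nodup_append hnodupP
          have hnodupQ := hQ'path j
          rw [Walk.IsPath, hs₂] at hnodupQ
          have hdisj₂ := List.disjoint_of_nodup_append hnodupQ
          have hq₁X : ∀ w ∈ q₁.support, w ∉ (↑X : Set V) := by
            intro w hw hwX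
            have hwP : w ∈ (P' i).support := by
              rw [hs₁]; exact List.mem_append_left _ hw
            have hwc : w = c' i := hfirstP i w hwP hwX
            have hcr : c' i ∈ r₁.support := Walk.end_mem_support r₁
            have hvne : c' i ≠ v₀ := fun h => hvX (h ▸ (hwc ▸ hwX))
            have hcr' : c' i ∈ r₁.support.tail := by
              rw [hl₁] at hcr
              rw [htl₁]
              rcases List.mem_cons.1 hcr with h1 | h1
              · exact absurd h1 hvne
              · exact h1
            exact hdisj₁ (hwc ▸ hw) hcr'
          have hr₂X : ∀ w ∈ r₂.support, w ∉ (↑X : Set V) := by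
            intro w hw hwX
            have hwQ : w ∈ (Q' j).support := by
              rw [hl₂] at hw
              rcases List.mem_cons.1 hw with rfl | h1
              · exact hvQ
              · rw [hs₂]
                exact List.mem_append_right _ (htl₂ ▸ h1)
            have hwd : w = d' j := hlastQ j w hwQ hwX
            have hdq : d' j ∈ q₂.support := Walk.start_mem_support q₂
            have hvne : d' j ≠ v₀ := fun h => hvX (h ▸ (hwd ▸ hwX))
            have hdr : d' j ∈ r₂.support.tail := by
              rw [hl₂] at hw
              rw [htl₂]
              rcases List.mem_cons.1 (hwd ▸ hw) with h1 | h1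
              · exact absurd h1 hvne
              · exact h1
            exact hdisj₂ hdq hdr
          -- glue and contradict that X separates A from B in G
          have hedgesG : ∀ f ∈ (q₁.append r₂).edges, f ∈ G.edgeSet := by
            intro f hf
            rw [Walk.edges_append] at hf
            rcases List.mem_append.1 hf with hf | hf
            · exact (Walk.edges_mem_edgeSet q₁ hf).1
            · exact (Walk.edges_mem_edgeSet r₂ hf).1
          obtain ⟨w, hw, hwX⟩ := hXsep (Walk.transfer (G := G.delE e) (G₂ := G) rfl (q₁.append r₂) hedgesG)
            (fP i).ha (fQ j).hb
          have hw := (congrArg (w ∈ ·) (Walk.support_transfer (G := G.delE e) (G₂ := G) rfl (q₁.append r₂) hedgesG)).mp hw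
          rw [Walk.support_append] at hw
          rcases List.mem_append.1 hw with hw | hw
          · exact hq₁X w hw (by exact_mod_cast hwX)
          · have hw2 : w ∈ r₂.support := by
              rw [hl₂]
              exact List.mem_cons_of_mem _ (by rwa [htl₂] at hw)
            exact hr₂X w hw2 (by exact_mod_cast hwX)
        have hcP : ∀ i j v₀, v₀ ∈ (P' i).support → v₀ ∈ (Q' j).support →
            v₀ = c' i ∧ v₀ = d' j := by
          intro i j v₀ hv1 hv2
          have hvX := hcommon i j v₀ hv1 hv2
          exact ⟨hfirstP i v₀ hv1 hvX, hlastQ j v₀ hv2 hvX⟩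
        -- glue the matched pairs
        set R : (i : Fin k) → (G.delE e).Walk (fP i).a (fQ (σ i)).b :=
          fun i => (P' i).append ((Q' (σ i)).castStart (hmatch i)) with hR
        have hsupR : ∀ i, (R i).support = (P' i).support ++ ((Q' (σ i)).support).tail := by
          intro i
          simp only [hR, Walk.support_append, Walk.support_castStart]
        have hRpath : ∀ i, (R i).IsPath := by
          intro i
          rw [Walk.IsPath, hsupR i]
          obtain ⟨l₂, hl₂⟩ := Walk.support_eq_cons (Q' (σ i))
          have hnodupQ := hQ'path (σ i)
          rw [Walk.IsPath, hl₂, List.nodup_cons] at hnodupQ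
          rw [List.nodup_append]
          refine ⟨hP'path i, by rw [hl₂]; exact hnodupQ.2, ?_⟩
          intro w hwP b hwT hwb
          subst hwb
          have hwQ : w ∈ (Q' (σ i)).support := by
            rw [hl₂]
            rw [hl₂] at hwT
            exact List.mem_cons_of_mem _ hwT
          obtain ⟨h1, h2⟩ := hcP i (σ i) w hwP hwQ
          rw [hl₂] at hwT
          apply hnodupQ.1
          rw [← h2]
          exact hwT
        have hedgesRG : ∀ i, ∀ f ∈ (R i).edges, f ∈ G.edgeSet := by
          intro i f hf
          rw [hR, Walk.edges_append] at hf
          rcases List.mem_append.1 hf with hf | hf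
          · exact (Walk.edges_mem_edgeSet _ hf).1
          · exact (Walk.edges_mem_edgeSet _ hf).1
        refine ⟨fun i => ⟨Walk.transfer (G := G.delE e) (G₂ := G) rfl (R i) (hedgesRG i), (fP i).ha, (fQ (σ i)).hb,
          (congrArg List.Nodup (Walk.support_transfer (G := G.delE e) (G₂ := G) rfl (R i) (hedgesRG i))).mpr (hRpath i)⟩, ?_⟩
        intro i j hij v₀ hvi hvj
        have hvi := (congrArg (v₀ ∈ ·) (Walk.support_transfer (G := G.delE e) (G₂ := G) rfl (R i) (hedgesRG i))).mp hvi
        rw [hsupR i] at hvi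
        have hvj := (congrArg (v₀ ∈ ·) (Walk.support_transfer (G := G.delE e) (G₂ := G) rfl (R j) (hedgesRG j))).mp hvj
        rw [hsupR j] at hvj
        have hQtail : ∀ a, ∀ w, w ∈ ((Q' a).support).tail → w ∈ (Q' a).support := by
          intro a w hw
          obtain ⟨l₂, hl₂⟩ := Walk.support_eq_cons (Q' a)
          rw [hl₂]
          rw [hl₂] at hw
          exact List.mem_cons_of_mem _ hw
        rcases List.mem_append.1 hvi with hvi1 | hvi1 <;> rcases List.mem_append.1 hvj with hvj1 | hvj1
        · exact hdisjP i j hij v₀ (hsubP i _ hvi1) (hsubP j _ hvj1)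
        · obtain ⟨h1, h2⟩ := hcP i (σ j) v₀ hvi1 (hQtail (σ j) v₀ hvj1)
          rw [hmatch j] at h2
          exact hij (hc'inj (h1.symm.trans h2))
        · obtain ⟨h1, h2⟩ := hcP j (σ i) v₀ hvj1 (hQtail (σ i) v₀ hvi1)
          rw [hmatch i] at h2
          exact hij (hc'inj (h2.symm.trans h1))
        · exact hdisjQ (σ i) (σ j) (fun h => hij (hσinj h)) v₀
            (hsubQ (σ i) _ (hQtail (σ i) v₀ hvi1)) (hsubQ (σ j) _ (hQtail (σ j) v₀ hvj1))

section Subdivision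

lemma ends_rep' (z : Sym2 V) : ∃ p : V × V, z = s(p.1, p.2) := by
  obtain ⟨a, b, h⟩ := ends_rep z
  exact ⟨(a, b), h⟩

noncomputable def oend (G : Multigraph V E) (e : E) : V × V :=
  Classical.choose (ends_rep' (G.ends e))

lemma oend_spec (G : Multigraph V E) (e : E) :
    G.ends e = s((oend G e).1, (oend G e).2) :=
  Classical.choose_spec (ends_rep' (G.ends e))

noncomputable def side (G : Multigraph V E) (eb : E × Bool) : V :=
  if eb.2 then (oend G eb.1).1 else (oend G eb.1).2

lemma side_mem (G : Multigraph V E) (e : E) (b : Bool) : side G (e, b) ∈ G.ends e := by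
  rw [oend_spec G e]
  cases b
  · exact Sym2.mem_mk_right _ _
  · exact Sym2.mem_mk_left _ _

lemma exists_side (G : Multigraph V E) {e : E} {u : V} (hu : u ∈ G.ends e) :
    ∃ b, side G (e, b) = u := by
  rw [oend_spec G e, Sym2.mem_iff] at hu
  rcases hu with h | h
  · exact ⟨true, h.symm⟩
  · exact ⟨false, h.symm⟩

/-- The subdivision of `G` with the vertices `s` and `t` deleted: vertices are
`V ⊕ E`, and each edge `e` with an endpoint `u ∉ {s,t}` yields an edge from
`inl u` to `inr e`. -/
noncomputable def subdiv (G : Multigraph V E) (s t : V) : Multigraph (V ⊕ E) (E × Bool) where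
  edgeSet := {eb | eb.1 ∈ G.edgeSet ∧ side G eb ≠ s ∧ side G eb ≠ t}
  ends eb := s(Sum.inl (side G eb), Sum.inr eb.1)
  no_loops := by
    intro eb _ hd
    rw [Sym2.isDiag_iff_proj_eq] at hd
    simp at hd

lemma gtoH (G : Multigraph V E) (s t : V) :
    ∀ {u : V} (p : G.Walk u t), p.IsPath → s ∉ p.support →
    ∀ (e₀ : E), e₀ ∈ G.edgeSet → u ∈ G.ends e₀ →
    ∃ (f : E) (q : (subdiv G s t).Walk (Sum.inr e₀) (Sum.inr f)),
      t ∈ G.ends f ∧ f ∈ (e₀ :: p.edges) ∧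
      ∀ z ∈ q.support, (∃ v ∈ p.support, v ≠ t ∧ z = Sum.inl v) ∨
        ∃ g ∈ e₀ :: p.edges, z = Sum.inr g := by
  intro u p
  induction p with
  | nil v =>
      intro _ _ e₀ he₀ hu
      refine ⟨e₀, .nil (Sum.inr e₀), hu, List.mem_cons_self, ?_⟩
      intro z hz
      simp only [Walk.support_nil, List.mem_singleton] at hz
      exact Or.inr ⟨e₀, List.mem_cons_self, hz⟩
  | cons e' he' hx' p' ih =>
      rename_i u₀ v₀ w₀
      intro hpath hs e₀ he₀ hu
      have hunet : u₀ ≠ w₀ := by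
        intro h
        have ht' : w₀ ∈ p'.support := Walk.end_mem_support p'
        have := (Walk.isPath_tail hpath).2
        rw [h] at this
        exact this ht'
      have hunes : u₀ ≠ s := by
        intro h
        exact hs (h ▸ Walk.start_mem_support _)
      obtain ⟨b₀, hb₀⟩ := exists_side G hu
      obtain ⟨b₁, hb₁⟩ := exists_side G (show u₀ ∈ G.ends e' by rw [hx']; exact Sym2.mem_mk_left _ _)
      have hmem₀ : (e₀, b₀) ∈ (subdiv G s w₀).edgeSet :=
        ⟨he₀, by rw [hb₀]; exact hunes, by rw [hb₀]; exact hunet⟩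
      have hmem₁ : (e', b₁) ∈ (subdiv G s w₀).edgeSet :=
        ⟨he', by rw [hb₁]; exact hunes, by rw [hb₁]; exact hunet⟩
      have hsnot : s ∉ p'.support := fun h => hs (List.mem_cons_of_mem _ h)
      obtain ⟨f, q', htf, hfmem, hsupp⟩ := ih (Walk.isPath_tail hpath).1 hsnot e'
        he' (by rw [hx']; exact Sym2.mem_mk_right _ _)
      have hends₀ : (subdiv G s w₀).ends (e₀, b₀) = s(Sum.inr e₀, Sum.inl u₀) := by
        show s(Sum.inl (side G (e₀, b₀)), Sum.inr e₀) = _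
        rw [hb₀, Sym2.eq_swap]
      have hends₁ : (subdiv G s w₀).ends (e', b₁) = s(Sum.inl u₀, Sum.inr e') := by
        show s(Sum.inl (side G (e', b₁)), Sum.inr e') = _
        rw [hb₁]
      refine ⟨f, .cons (e₀, b₀) hmem₀ hends₀ (.cons (e', b₁) hmem₁ hends₁ q'), htf,
        List.mem_cons_of_mem _ hfmem, ?_⟩
      intro z hz
      rcases List.mem_cons.1 hz with rfl | hz
      · exact Or.inr ⟨e₀, List.mem_cons_self, rfl⟩
      rcases List.mem_cons.1 hz with rfl | hz
      · exact Or.inl ⟨u₀, Walk.start_mem_support _, hunet, rfl⟩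
      · rcases hsupp z hz with ⟨v, hv, hvt, hzv⟩ | ⟨g, hg, hzg⟩
        · exact Or.inl ⟨v, List.mem_cons_of_mem _ hv, hvt, hzv⟩
        · exact Or.inr ⟨g, by
            rcases List.mem_cons.1 hg with rfl | hg
            · exact List.mem_cons_of_mem _ (by simp [Walk.edges])
            · exact List.mem_cons_of_mem _ (List.mem_cons_of_mem _ hg), hzg⟩

lemma htoG (G : Multigraph V E) (s t : V) :
    ∀ {z₁ z₂ : V ⊕ E} (q : (subdiv G s t).Walk z₁ z₂) (g : E), z₂ = Sum.inr g →
      t ∈ G.ends g → ∀ (a : V),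
      (z₁ = Sum.inl a ∨ ∃ f, z₁ = Sum.inr f ∧ f ∈ G.edgeSet ∧ a ∈ G.ends f) →
      ∃ w : G.Walk a t, (∀ v ∈ w.support, v = a ∨ v = t ∨ Sum.inl v ∈ q.support) ∧
        (∀ x ∈ w.edges, Sum.inr x ∈ q.support) := by
  intro z₁ z₂ q
  induction q with
  | nil z =>
      intro g hz₂ htg a hstart
      subst hz₂
      rcases hstart with h | ⟨f, hf, hfG, haf⟩
      · exact absurd (h.symm.trans rfl) (by simp)
      · have hfg : f = g := by
          have := hf.symm.trans rfl
          exact Sum.inr.inj this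
        subst hfg
        by_cases hat : a = t
        · subst hat
          exact ⟨.nil a, by simp [Walk.support], by simp [Walk.edges]⟩
        · have hends : G.ends f = s(a, t) := (Sym2.mem_and_mem_iff hat).1 ⟨haf, htg⟩
          refine ⟨.cons f hfG hends (.nil t), ?_, ?_⟩
          · intro v hv
            rcases List.mem_cons.1 hv with rfl | hv
            · exact Or.inl rfl
            · simp only [Walk.support_nil, List.mem_singleton] at hv
              exact Or.inr (Or.inl hv)
          · intro x hx
            simp only [Walk.edges_cons, Walk.edges_nil, List.mem_singleton] at hx
            subst hx
            simp only [Walk.support_nil, List.mem_singleton]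
  | cons ε hε huv r ihr =>
      rename_i z₁ zmid z₂
      intro g hz₂ htg a hstart
      have hεends : (subdiv G s t).ends ε = s(Sum.inl (side G ε), Sum.inr ε.1) := rfl
      rw [hεends] at huv
      rcases Sym2.eq_iff.1 huv with ⟨h1, h2⟩ | ⟨h1, h2⟩
      · -- z₁ = inl (side ε), zmid = inr ε.1
        rcases hstart with hz | ⟨f, hf, _, _⟩
        · have haside : a = side G ε := by
            have := hz.symm.trans h1.symm
            exact Sum.inl.inj this
          obtain ⟨w, hw1, hw2⟩ := ihr g hz₂ htg a
            (Or.inr ⟨ε.1, h2.symm, hε.1, by rw [haside]; exact side_mem G ε.1 ε.2⟩)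
          refine ⟨w, ?_, ?_⟩
          · intro v hv
            rcases hw1 v hv with h | h | h
            · exact Or.inl h
            · exact Or.inr (Or.inl h)
            · exact Or.inr (Or.inr (List.mem_cons_of_mem _ h))
          · intro x hx
            exact List.mem_cons_of_mem _ (hw2 x hx)
        · exact absurd (hf.symm.trans h1.symm) (by simp)
      · -- z₁ = inr ε.1, zmid = inl (side ε)
        rcases hstart with hz | ⟨f, hf, hfG, haf⟩
        · exact absurd (hz.symm.trans h2.symm) (by simp)
        · have hfε : f = ε.1 := Sum.inr.inj (hf.symm.trans h2.symm)
          set c := side G ε with hc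
          have hcf : c ∈ G.ends f := by rw [hfε, hc]; exact side_mem G ε.1 ε.2
          obtain ⟨w', hw1, hw2⟩ := ihr g hz₂ htg c (Or.inl h1.symm)
          have hmidsup : zmid ∈ r.support := Walk.start_mem_support r
          by_cases hac : a = c
          · subst hac
            refine ⟨w', ?_, fun x hx => List.mem_cons_of_mem _ (hw2 x hx)⟩
            intro v hv
            rcases hw1 v hv with h | h | h
            · exact Or.inl h
            · exact Or.inr (Or.inl h)
            · exact Or.inr (Or.inr (List.mem_cons_of_mem _ h))
          · have hends : G.ends f = s(a, c) := (Sym2.mem_and_mem_iff hac).1 ⟨haf, hcf⟩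
            refine ⟨.cons f hfG hends w', ?_, ?_⟩
            · intro v hv
              rcases List.mem_cons.1 hv with rfl | hv
              · exact Or.inl rfl
              rcases hw1 v hv with h | h | h
              · subst h
                refine Or.inr (Or.inr ?_)
                have hzc : Sum.inl c = zmid := h1
                exact List.mem_cons_of_mem _ (by rw [hzc]; exact hmidsup)
              · exact Or.inr (Or.inl h)
              · exact Or.inr (Or.inr (List.mem_cons_of_mem _ h))
            · intro x hx
              rcases List.mem_cons.1 hx with rfl | hx
              · exact List.mem_cons.2 (Or.inl hf.symm)
              · exact List.mem_cons_of_mem _ (hw2 x hx)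

end Subdivision


end Multigraph

open Multigraph in
theorem menger_mixed' {V E : Type} [Fintype V] [Fintype E] (G : Multigraph V E) (s t : V)
    (hst : s ≠ t) :
    sInf {n | ∃ (W : Finset V) (F : Finset E),
        G.DisconnectingPair s t W F ∧ W.card + F.card = n} =
      sSup {n | ∃ P : Fin n → {p : G.Walk s t // p.IsPath},
        Function.Injective P ∧ ∀ i j, i ≠ j → InternallyDisjoint (P i).1 (P j).1} := by
  classical
  set L := {n | ∃ (W : Finset V) (F : Finset E),
      G.DisconnectingPair s t W F ∧ W.card + F.card = n} with hL
  set R := {n | ∃ P : Fin n → {p : G.Walk s t // p.IsPath},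
      Function.Injective P ∧ ∀ i j, i ≠ j → InternallyDisjoint (P i).1 (P j).1} with hRdef
  -- L is nonempty
  have hLne : L.Nonempty := by
    refine ⟨(∅ : Finset V).card + (Set.toFinite G.edgeSet).toFinset.card, ∅,
      (Set.toFinite G.edgeSet).toFinset, ⟨?_, ?_, ?_⟩, rfl⟩
    · simp
    · intro e heF
      simpa [Set.Finite.mem_toFinset] using heF
    · intro p
      obtain ⟨x₁, e, he, hx, q, hpeq⟩ := Walk.exists_cons_of_ne hst p
      refine Or.inr ⟨e, ?_, by simpa [Set.Finite.mem_toFinset] using he⟩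
      rw [hpeq, Walk.edges_cons]
      exact List.mem_cons_self
  -- the easy direction: every path system is at most every cut
  have easy : ∀ r ∈ R, ∀ l ∈ L, r ≤ l := by
    intro r hr l hl
    obtain ⟨P, hinj, hdis⟩ := hr
    obtain ⟨W, F, ⟨hW, hF, hcut⟩, hsum⟩ := hl
    set g : Fin r → ({w // w ∈ W} ⊕ {f // f ∈ F}) := fun i =>
      if h : ∃ x ∈ (P i).1.support, x ∈ W then
        Sum.inl ⟨h.choose, h.choose_spec.2⟩
      else
        Sum.inr ⟨((hcut (P i).1).resolve_left h).choose,
          ((hcut (P i).1).resolve_left h).choose_spec.2⟩ with hg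
    have hginj : Function.Injective g := by
      intro i j hgij
      by_contra hne
      have hdisij := hdis i j hne
      rw [hg] at hgij
      simp only at hgij
      split_ifs at hgij with h1 h2 h2
      · -- both vertex hits
        have hiv := h1.choose_spec
        have hjv := h2.choose_spec
        have hvv : h1.choose = h2.choose := Subtype.mk_eq_mk.1 (Sum.inl.inj hgij)
        have hmem2 : h1.choose ∈ (P j).1.support := hvv ▸ hjv.1
        have := hdisij h1.choose hiv.1 hmem2
        have hWc := hW (Finset.mem_coe.2 hiv.2)
        simp only [Set.mem_compl_iff, Set.mem_insert_iff, Set.mem_singleton_iff] at hWc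
        rcases this with h | h
        · exact hWc (Or.inl h)
        · exact hWc (Or.inr h)
      · -- both edge hits
        have hie := ((hcut (P i).1).resolve_left h1).choose_spec
        have hje := ((hcut (P j).1).resolve_left h2).choose_spec
        have hee := Subtype.mk_eq_mk.1 (Sum.inr.inj hgij)
        have hmem2 : ((hcut (P i).1).resolve_left h1).choose ∈ (P j).1.edges :=
          hee ▸ hje.1
        have := eq_of_shared_edge hst (P i).2 (P j).2 hdisij hie.1 hmem2
        exact hne (hinj (Subtype.ext this))
    have := Fintype.card_le_of_injective g hginj
    simp only [Fintype.card_fin, Fintype.card_sum, Fintype.card_coe] at this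
    omega
  set k := sInf L with hk
  have hkL : k ∈ L := Nat.sInf_mem hLne
  -- the hard direction: k internally disjoint paths exist
  have hkR : k ∈ R := by
    set H := subdiv G s t with hH
    set Aset : Set (V ⊕ E) := {z | ∃ e, z = Sum.inr e ∧ e ∈ G.edgeSet ∧ s ∈ G.ends e} with hA
    set Bset : Set (V ⊕ E) := {z | ∃ e, z = Sum.inr e ∧ e ∈ G.edgeSet ∧ t ∈ G.ends e} with hB
    have hsepBound : ∀ S : Finset (V ⊕ E), Sep H Aset Bset S → k ≤ S.card := by
      intro S hS
      set W : Finset V := Finset.univ.filter (fun v : V => Sum.inl v ∈ S ∧ v ≠ s ∧ v ≠ t) with hWdef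
      set F : Finset E := Finset.univ.filter (fun e : E => Sum.inr e ∈ S ∧ e ∈ G.edgeSet) with hFdef
      have hdisc : G.DisconnectingPair s t W F := by
        refine ⟨?_, ?_, ?_⟩
        · intro v hv
          rw [Finset.mem_coe, hWdef, Finset.mem_filter] at hv
          simp only [Set.mem_compl_iff, Set.mem_insert_iff, Set.mem_singleton_iff]
          rintro (h | h)
          · exact hv.2.2.1 h
          · exact hv.2.2.2 h
        · intro e heF
          rw [Finset.mem_coe, hFdef, Finset.mem_filter] at heF
          exact heF.2.2
        · intro p
          set pb := p.bypass with hpb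
          have hpbpath : pb.IsPath := Walk.bypass_isPath p
          obtain ⟨x₁, e₁, he₁, hx₁, p₁, hpeq⟩ := Walk.exists_cons_of_ne hst pb
          rw [hpeq] at hpbpath
          have hp₁path := (Walk.isPath_tail hpbpath).1
          have hsnot : s ∉ p₁.support := (Walk.isPath_tail hpbpath).2
          obtain ⟨f, q, htf, hfmem, hsupp⟩ := gtoH G s t p₁ hp₁path hsnot e₁ he₁
            (by rw [hx₁]; exact Sym2.mem_mk_right _ _)
          have hfG : f ∈ G.edgeSet := by
            rcases List.mem_cons.1 hfmem with rfl | h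
            · exact he₁
            · exact Walk.edges_mem_edgeSet p₁ h
          obtain ⟨z, hzq, hzS⟩ := hS q
            ⟨e₁, rfl, he₁, by rw [hx₁]; exact Sym2.mem_mk_left _ _⟩
            ⟨f, rfl, hfG, htf⟩
          rcases hsupp z hzq with ⟨v, hvp₁, hvt, rfl⟩ | ⟨gE, hgE, rfl⟩
          · refine Or.inl ⟨v, ?_, ?_⟩
            · apply Walk.support_bypass_subset p
              rw [← hpb, hpeq, Walk.support_cons]
              exact List.mem_cons_of_mem _ hvp₁
            · rw [hWdef, Finset.mem_filter]
              exact ⟨Finset.mem_univ _, hzS, fun h => hsnot (h ▸ hvp₁), hvt⟩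
          · refine Or.inr ⟨gE, ?_, ?_⟩
            · apply Walk.edges_bypass_subset p
              rw [← hpb, hpeq, Walk.edges_cons]
              exact hgE
            · rw [hFdef, Finset.mem_filter]
              refine ⟨Finset.mem_univ _, hzS, ?_⟩
              rcases List.mem_cons.1 hgE with rfl | h
              · exact he₁
              · exact Walk.edges_mem_edgeSet p₁ h
      have hkle : k ≤ W.card + F.card := Nat.sInf_le ⟨W, F, hdisc, rfl⟩
      have hsub : (W.image Sum.inl ∪ F.image Sum.inr) ⊆ S := by
        intro z hz
        rcases Finset.mem_union.1 hz with hz | hz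
        · obtain ⟨v, hv, rfl⟩ := Finset.mem_image.1 hz
          rw [hWdef, Finset.mem_filter] at hv
          exact hv.2.1
        · obtain ⟨e, heF, rfl⟩ := Finset.mem_image.1 hz
          rw [hFdef, Finset.mem_filter] at heF
          exact heF.2.1
      have hdisjim : Disjoint (W.image Sum.inl) (F.image Sum.inr) := by
        rw [Finset.disjoint_left]
        intro z hz1 hz2
        obtain ⟨v, _, rfl⟩ := Finset.mem_image.1 hz1
        obtain ⟨e, _, he⟩ := Finset.mem_image.1 hz2
        exact absurd he (by simp)
      have hcard : W.card + F.card ≤ S.card := by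
        calc W.card + F.card
            = (W.image Sum.inl).card + (F.image Sum.inr).card := by
              rw [Finset.card_image_of_injective _ Sum.inl_injective,
                Finset.card_image_of_injective _ Sum.inr_injective]
          _ = (W.image Sum.inl ∪ F.image Sum.inr).card :=
              (Finset.card_union_of_disjoint hdisjim).symm
          _ ≤ S.card := Finset.card_le_card hsub
      exact hkle.trans hcard
    obtain ⟨fH, hdisH⟩ := core (esize H) H le_rfl Aset Bset k hsepBound
    have hexw : ∀ i : Fin k, ∃ w : G.Walk s t,
        (∀ v ∈ w.support, v = s ∨ v = t ∨ Sum.inl v ∈ (fH i).walk.support) ∧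
        (∀ x ∈ w.edges, Sum.inr x ∈ (fH i).walk.support) := by
      intro i
      obtain ⟨e₁, hae, he₁G, hse₁⟩ := (fH i).ha
      obtain ⟨f₁, hbe, hf₁G, htf₁⟩ := (fH i).hb
      exact htoG G s t (fH i).walk f₁ hbe htf₁ s (Or.inr ⟨e₁, hae, he₁G, hse₁⟩)
    choose w hw1 hw2 using hexw
    refine ⟨fun i => ⟨(w i).bypass, Walk.bypass_isPath _⟩, ?_, ?_⟩
    · intro i j hPij
      by_contra hne
      obtain ⟨x₁, e₂, he₂, hx₂, q₂, hpeq₂⟩ := Walk.exists_cons_of_ne hst ((w i).bypass)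
      have he2i : e₂ ∈ (w i).bypass.edges := by
        rw [hpeq₂, Walk.edges_cons]; exact List.mem_cons_self
      have he2j : e₂ ∈ (w j).bypass.edges := by
        have : ((w i).bypass) = ((w j).bypass) := congrArg Subtype.val hPij
        rw [← this]; exact he2i
      have h1 : Sum.inr e₂ ∈ (fH i).walk.support := hw2 i e₂ (Walk.edges_bypass_subset _ he2i)
      have h2 : Sum.inr e₂ ∈ (fH j).walk.support := hw2 j e₂ (Walk.edges_bypass_subset _ he2j)
      exact hdisH i j hne (Sum.inr e₂) h1 h2
    · intro i j hne v hv1 hv2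
      have hv1' := hw1 i v (Walk.support_bypass_subset _ hv1)
      have hv2' := hw1 j v (Walk.support_bypass_subset _ hv2)
      rcases hv1' with h | h | h
      · exact Or.inl h
      · exact Or.inr h
      rcases hv2' with h' | h' | h'
      · exact Or.inl h'
      · exact Or.inr h'
      · exact absurd h' (hdisH i j hne (Sum.inl v) h)
  -- conclude
  have hR0 : (0 : ℕ) ∈ R := ⟨fun i => i.elim0, fun i => i.elim0, fun i => i.elim0⟩
  have hbdd : ∀ r ∈ R, r ≤ k := fun r hr => easy r hr k hkL
  refine le_antisymm ?_ ?_
  · exact le_csSup ⟨k, fun r hr => hbdd r hr⟩ hkR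
  · exact csSup_le ⟨0, hR0⟩ fun r hr => hbdd r hr



end MengerAux

open Multigraph in
/-- The minimum cardinality of an `s`-`t` disconnecting pair equals the maximum number
of internally disjoint `s`-`t` paths. -/
theorem menger_mixed {V E : Type} [Fintype V] [Fintype E] (G : Multigraph V E) (s t : V)
    (hst : s ≠ t) :
    sInf {n | ∃ (W : Finset V) (F : Finset E),
        G.DisconnectingPair s t W F ∧ W.card + F.card = n} =
      sSup {n | ∃ P : Fin n → {p : G.Walk s t // p.IsPath},
        Function.Injective P ∧ ∀ i j, i ≠ j → InternallyDisjoint (P i).1 (P j).1} := by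
  exact menger_mixed' G s t hst
end

section
/- Let G be a graph, s, t ∈ V(G) two distinct vertices, and k, l non-negative integers. Then (k,l) is a connectivity pair for s and t in G if and only if (k, l−|E(s,t)|) is a connectivity pair for s and t in the graph G−E(s,t) obtained by deleting all edges joining s and t. -/
namespace Multigraph

variable {V E : Type}

/-- Delete a set of edges from a multigraph. -/
def deleteEdges (G : Multigraph V E) (F : Set E) : Multigraph V E :=
  ⟨G.edgeSet \ F, G.ends, fun e he => G.no_loops e he.1⟩

end Multigraph

/-
Every `s`-`t` disconnecting pair must cut each edge joining `s` and `t`, since the one-edge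
path along it avoids all vertices other than `s` and `t`. Hence `(W, F) ↦ (W, F \ E(s, t))` and
`(W, F') ↦ (W, F' ∪ E(s, t))` are mutually inverse between the disconnecting pairs of `G` and
of `G - E(s, t)`, preserving the order and shifting the size by exactly `|E(s, t)|`; both
conditions defining a connectivity pair are invariant under this shift.
-/

namespace Multigraph

variable {V E : Type} {G : Multigraph V E}

def edgesBetween (G : Multigraph V E) (u v : V) : Set E :=
  {e ∈ G.edgeSet | G.ends e = s(u, v)}

namespace Walk

theorem mem_edgeSet_of_mem_edges {u v : V} (p : G.Walk u v) {e : E} (he : e ∈ p.edges) :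
    e ∈ G.edgeSet := by
  induction p with
  | nil => simp [edges] at he
  | cons f hf _ _ ih =>
    rcases List.mem_cons.1 he with rfl | he
    exacts [hf, ih he]

variable {F : Set E}

def ofDeleteEdges : {u v : V} → (G.deleteEdges F).Walk u v → G.Walk u v
  | _, _, .nil v => .nil v
  | _, _, .cons e he huv p => .cons e he.1 huv p.ofDeleteEdges

@[simp]
theorem support_ofDeleteEdges {u v : V} (p : (G.deleteEdges F).Walk u v) :
    p.ofDeleteEdges.support = p.support := by
  induction p <;> simp [ofDeleteEdges, support, *]

@[simp]
theorem edges_ofDeleteEdges {u v : V} (p : (G.deleteEdges F).Walk u v) :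
    p.ofDeleteEdges.edges = p.edges := by
  induction p <;> simp [ofDeleteEdges, edges, *]

def toDeleteEdges : {u v : V} → (p : G.Walk u v) → (∀ e ∈ p.edges, e ∉ F) →
    (G.deleteEdges F).Walk u v
  | _, _, .nil v, _ => .nil v
  | _, _, .cons e he huv p, h =>
    .cons e ⟨he, h e List.mem_cons_self⟩ huv
      (p.toDeleteEdges fun f hf => h f (List.mem_cons_of_mem e hf))

@[simp]
theorem support_toDeleteEdges {u v : V} (p : G.Walk u v) (h : ∀ e ∈ p.edges, e ∉ F) :
    (p.toDeleteEdges h).support = p.support := by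
  induction p <;> simp [toDeleteEdges, support, *]

@[simp]
theorem edges_toDeleteEdges {u v : V} (p : G.Walk u v) (h : ∀ e ∈ p.edges, e ∉ F) :
    (p.toDeleteEdges h).edges = p.edges := by
  induction p <;> simp [toDeleteEdges, edges, *]

end Walk

namespace DisconnectingPair

variable {s t : V} {W : Finset V} {F : Finset E}

theorem edgesBetween_subset (h : G.DisconnectingPair s t W F) : G.edgesBetween s t ⊆ F := by
  rintro e ⟨he, hst⟩
  rcases h.2.2 (.cons e he hst (.nil t)) with ⟨x, hx, hxW⟩ | ⟨f, hf, hfF⟩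
  · have hx : x = s ∨ x = t := by simpa [Walk.support] using hx
    exact (h.1 hxW (by simpa using hx)).elim
  · obtain rfl : f = e := by simpa [Walk.edges] using hf
    exact hfF

theorem deleteEdges [DecidableEq E] (h : G.DisconnectingPair s t W F) (S : Finset E) :
    (G.deleteEdges S).DisconnectingPair s t W (F \ S) := by
  refine ⟨h.1, fun e he => ?_, fun p => ?_⟩
  · rw [Finset.coe_sdiff] at he
    exact ⟨h.2.1 he.1, he.2⟩
  · rcases h.2.2 p.ofDeleteEdges with ⟨x, hx, hxW⟩ | ⟨e, he, heF⟩
    · exact .inl ⟨x, by simpa using hx, hxW⟩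
    · rw [Walk.edges_ofDeleteEdges] at he
      exact .inr ⟨e, he, Finset.mem_sdiff.2 ⟨heF, (p.mem_edgeSet_of_mem_edges he).2⟩⟩

theorem of_deleteEdges [DecidableEq E] {S : Finset E}
    (h : (G.deleteEdges S).DisconnectingPair s t W F) (hS : ↑S ⊆ G.edgeSet) :
    G.DisconnectingPair s t W (F ∪ S) := by
  refine ⟨h.1, fun e he => ?_, fun p => ?_⟩
  · rw [Finset.coe_union] at he
    exact he.elim (fun he => (h.2.1 he).1) (fun he => hS he)
  · by_cases hp : ∃ e ∈ p.edges, e ∈ S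
    · obtain ⟨e, he, heS⟩ := hp
      exact .inr ⟨e, he, Finset.mem_union_right F heS⟩
    · push Not at hp
      rcases h.2.2 (p.toDeleteEdges hp) with ⟨x, hx, hxW⟩ | ⟨e, he, heF⟩
      · exact .inl ⟨x, by simpa using hx, hxW⟩
      · exact .inr ⟨e, by simpa using he, Finset.mem_union_left S heF⟩

theorem disjoint_of_deleteEdges {S : Finset E}
    (h : (G.deleteEdges S).DisconnectingPair s t W F) : Disjoint F S :=
  Finset.disjoint_left.2 fun _ he => (h.2.1 he).2

end DisconnectingPair

variable {s t : V}

theorem exists_disconnectingPair_iff_deleteEdges [DecidableEq E] {S : Finset E}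
    (hS : ↑S ⊆ G.edgeSet) (hcut : ∀ W F, G.DisconnectingPair s t W F → S ⊆ F)
    (P : ℕ → ℕ → Prop) :
    (∃ W F, G.DisconnectingPair s t W F ∧ P W.card F.card) ↔
      ∃ W F, (G.deleteEdges S).DisconnectingPair s t W F ∧ P W.card (F.card + S.card) := by
  constructor
  · rintro ⟨W, F, h, hP⟩
    refine ⟨W, F \ S, h.deleteEdges S, ?_⟩
    rwa [Finset.card_sdiff_add_card_eq_card (hcut W F h)]
  · rintro ⟨W, F, h, hP⟩
    refine ⟨W, F ∪ S, h.of_deleteEdges hS, ?_⟩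
    rwa [Finset.card_union_of_disjoint h.disjoint_of_deleteEdges]

theorem connectivityPair_add_card_iff_deleteEdges [DecidableEq E] {S : Finset E}
    (hS : ↑S ⊆ G.edgeSet) (hcut : ∀ W F, G.DisconnectingPair s t W F → S ⊆ F) (k l : ℕ) :
    G.ConnectivityPair s t k (l + S.card) ↔ (G.deleteEdges S).ConnectivityPair s t k l := by
  unfold ConnectivityPair
  rw [exists_disconnectingPair_iff_deleteEdges hS hcut (fun a b => a = k ∧ b = l + S.card),
    exists_disconnectingPair_iff_deleteEdges hS hcut
      (fun a b => a + b < k + (l + S.card) ∧ a ≤ k ∧ b ≤ l + S.card)]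
  simp only [Nat.add_right_cancel_iff, ← Nat.add_assoc, Nat.add_lt_add_iff_right,
    Nat.add_le_add_iff_right]

end Multigraph

open Multigraph in
theorem connectivity_pair_delete_st_edges_general {V E : Type} [Fintype E] (G : Multigraph V E)
    (s t : V) (k l : ℕ) :
    G.ConnectivityPair s t k l ↔
      ∃ l' : ℕ, l = l' + {e ∈ G.edgeSet | G.ends e = s(s, t)}.ncard ∧
        (G.deleteEdges {e ∈ G.edgeSet | G.ends e = s(s, t)}).ConnectivityPair s t k l' := by
  classical
  change _ ↔ ∃ l' : ℕ, l = l' + (G.edgesBetween s t).ncard ∧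
    (G.deleteEdges (G.edgesBetween s t)).ConnectivityPair s t k l'
  obtain ⟨S, hS⟩ : ∃ S : Finset E, ↑S = G.edgesBetween s t :=
    ⟨_, (G.edgesBetween s t).toFinite.coe_toFinset⟩
  have hcut : ∀ W F, G.DisconnectingPair s t W F → S ⊆ F := fun W F h =>
    Finset.coe_subset.1 (hS ▸ h.edgesBetween_subset)
  rw [← hS, Set.ncard_coe_finset]
  have key := connectivityPair_add_card_iff_deleteEdges (hS ▸ Set.sep_subset _ _) hcut k
  constructor
  · intro hp
    obtain ⟨W, F, h, -, rfl⟩ := hp.1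
    obtain ⟨l', hl'⟩ := Nat.exists_eq_add_of_le' (Finset.card_le_card (hcut W F h))
    exact ⟨l', hl', (key l').1 (hl' ▸ hp)⟩
  · rintro ⟨l', rfl, hp⟩
    exact (key l').2 hp

open Multigraph in
/-- `(k, l)` is a connectivity pair for `s` and `t` in `G` if and only if
`(k, l - |E(s, t)|)` is a connectivity pair for `s` and `t` in `G - E(s, t)`
(the subtraction being the genuine one on integers, i.e. `l ≥ |E(s, t)|`). -/
theorem connectivity_pair_delete_st_edges {V E : Type} [Fintype E] (G : Multigraph V E)
    (s t : V) (hst : s ≠ t) (k l : ℕ) :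
    G.ConnectivityPair s t k l ↔
      ∃ l' : ℕ, l = l' + {e ∈ G.edgeSet | G.ends e = s(s, t)}.ncard ∧
        (G.deleteEdges {e ∈ G.edgeSet | G.ends e = s(s, t)}).ConnectivityPair s t k l' :=
  connectivity_pair_delete_st_edges_general G s t k l
end

section
/- Let G be the graph on vertices x₁,…,x₇ obtained as the union of the complete graph on {x₁,x₂,x₃,x₄} and the complete graph on {x₁,x₅,x₆,x₇}, together with one additional edge joining x₂ and x₅. Then G contains a separator consisting of one vertex and one edge (namely, deleting the vertex x₁ and the edge x₂x₅ disconnects G), and yet between any pair of distinct vertices of G there exist three edge-disjoint paths of which two are internally disjoint. -/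
/-- The edges of the counterexample graph: the union of the complete graphs on
`{x₁, x₂, x₃, x₄} = {0, 1, 2, 3}` and `{x₁, x₅, x₆, x₇} = {0, 4, 5, 6}` together with
the extra edge `x₂x₅ = s(1, 4)`. -/
def exEdges : Set (Sym2 (Fin 7)) :=
  {s(0, 1), s(0, 2), s(0, 3), s(1, 2), s(1, 3), s(2, 3),
    s(0, 4), s(0, 5), s(0, 6), s(4, 5), s(4, 6), s(5, 6), s(1, 4)}

/-- The counterexample graph of Sadeghi and Fan's claim, as a (simple) multigraph. -/
def exGraph : Multigraph (Fin 7) (Sym2 (Fin 7)) where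
  edgeSet := exEdges
  ends := id
  no_loops := by
    intro e he
    simp only [exEdges, Set.mem_insert_iff, Set.mem_singleton_iff] at he
    rcases he with rfl | rfl | rfl | rfl | rfl | rfl | rfl | rfl | rfl | rfl | rfl | rfl | rfl <;>
      decide

namespace Multigraph

variable {V E : Type}

theorem Walk.start_mem_support_s8 {G : Multigraph V E} {u v : V} (p : G.Walk u v) :
    u ∈ p.support := by
  cases p <;> simp [Walk.support]

theorem Walk.end_mem_of_closed {G : Multigraph V E} (S : Set V) {P : V → Prop} {Q : E → Prop}
    (hS : ∀ e ∈ G.edgeSet, Q e → ∀ a b, G.ends e = s(a, b) → a ∈ S → P b → b ∈ S)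
    {u v : V} (p : G.Walk u v) (hP : ∀ x ∈ p.support, P x) (hQ : ∀ e ∈ p.edges, Q e)
    (hu : u ∈ S) : v ∈ S := by
  induction p with
  | nil => exact hu
  | cons e he hends q ih =>
    simp only [Walk.support, Walk.edges, List.mem_cons, forall_eq_or_imp] at hP hQ
    exact ih hP.2 hQ.2 (hS e he hQ.1 _ _ hends hu (hP.2 _ q.start_mem_support_s8))

def IsVertexChain (G : Multigraph V (Sym2 V)) : V → List V → V → Prop
  | u, [], v => u = v
  | u, w :: l, v => s(u, w) ∈ G.edgeSet ∧ G.IsVertexChain w l v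

instance IsVertexChain.decidable [DecidableEq V] (G : Multigraph V (Sym2 V))
    [DecidablePred (· ∈ G.edgeSet)] : ∀ u l v, Decidable (G.IsVertexChain u l v)
  | u, [], v => inferInstanceAs (Decidable (u = v))
  | _, w :: l, v =>
    have := IsVertexChain.decidable G w l v
    inferInstanceAs (Decidable (_ ∧ _))

def chainEdges : V → List V → List (Sym2 V)
  | _, [] => []
  | u, w :: l => s(u, w) :: chainEdges w l

variable {G : Multigraph V (Sym2 V)}

def Walk.ofVertexChain (hG : ∀ e, G.ends e = e) :
    (u : V) → (l : List V) → (v : V) → G.IsVertexChain u l v → G.Walk u v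
  | u, [], _, rfl => .nil u
  | u, w :: l, v, h => .cons s(u, w) h.1 (hG _) (ofVertexChain hG w l v h.2)

theorem Walk.support_ofVertexChain (hG : ∀ e, G.ends e = e) :
    ∀ (u : V) (l : List V) (v : V) (h : G.IsVertexChain u l v),
      (ofVertexChain hG u l v h).support = u :: l
  | _, [], _, rfl => rfl
  | u, w :: l, v, h => congrArg (u :: ·) (support_ofVertexChain hG w l v h.2)

theorem Walk.edges_ofVertexChain (hG : ∀ e, G.ends e = e) :
    ∀ (u : V) (l : List V) (v : V) (h : G.IsVertexChain u l v),
      (ofVertexChain hG u l v h).edges = chainEdges u l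
  | _, [], _, rfl => rfl
  | u, w :: l, v, h => congrArg (s(u, w) :: ·) (edges_ofVertexChain hG w l v h.2)

end Multigraph

open Multigraph

instance : DecidablePred (· ∈ exGraph.edgeSet) := fun _ => by
  dsimp only [exGraph, exEdges]
  infer_instance

theorem exGraph_closed_left_of_deletion :
    ∀ e ∈ exGraph.edgeSet, e ≠ s(1, 4) → ∀ a b, exGraph.ends e = s(a, b) →
      a ∈ ({1, 2, 3} : Set (Fin 7)) → b ≠ 0 → b ∈ ({1, 2, 3} : Set (Fin 7)) := by
  rintro _ he hne a b rfl
  revert a b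
  decide

theorem exGraph_deletion_disconnects (p : exGraph.Walk 1 4) :
    ¬ ((∀ x ∈ p.support, x ≠ 0) ∧ ∀ e ∈ p.edges, e ≠ s(1, 4)) := fun ⟨h0, h14⟩ =>
  absurd (p.end_mem_of_closed _ exGraph_closed_left_of_deletion h0 h14 (by decide)) (by decide)

/-- The route from `u` to `v` as the list of vertices after `u`, for `u < v`. -/
def exRoutesAsc : Fin 7 → Fin 7 → Fin 3 → List (Fin 7)
  | 0, 1 => ![[1], [2, 1], [3, 1]]
  | 0, 2 => ![[2], [1, 2], [3, 2]]
  | 0, 3 => ![[3], [1, 3], [2, 3]]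
  | 0, 4 => ![[4], [5, 4], [6, 4]]
  | 0, 5 => ![[5], [4, 5], [6, 5]]
  | 0, 6 => ![[6], [4, 6], [5, 6]]
  | 1, 2 => ![[2], [3, 2], [0, 2]]
  | 1, 3 => ![[3], [2, 3], [0, 3]]
  | 1, 4 => ![[4], [0, 4], [2, 0, 5, 4]]
  | 1, 5 => ![[4, 5], [0, 5], [3, 0, 6, 5]]
  | 1, 6 => ![[4, 6], [0, 6], [2, 0, 5, 6]]
  | 2, 3 => ![[3], [1, 3], [0, 3]]
  | 2, 4 => ![[1, 4], [0, 4], [3, 0, 5, 4]]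
  | 2, 5 => ![[1, 4, 5], [0, 5], [3, 1, 0, 6, 5]]
  | 2, 6 => ![[1, 4, 6], [0, 6], [3, 0, 5, 6]]
  | 3, 4 => ![[1, 4], [0, 4], [2, 0, 5, 4]]
  | 3, 5 => ![[1, 4, 5], [0, 5], [2, 0, 6, 5]]
  | 3, 6 => ![[1, 4, 6], [0, 6], [2, 0, 5, 6]]
  | 4, 5 => ![[5], [6, 5], [0, 5]]
  | 4, 6 => ![[6], [5, 6], [0, 6]]
  | 5, 6 => ![[6], [4, 6], [0, 6]]
  | _, _ => ![[], [], []]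

def exRoutes (u v : Fin 7) (i : Fin 3) : List (Fin 7) :=
  if u < v then exRoutesAsc u v i else (v :: exRoutesAsc v u i).reverse.tail

theorem exRoutes_isVertexChain :
    ∀ u v : Fin 7, u ≠ v → ∀ i, exGraph.IsVertexChain u (exRoutes u v i) v := by
  decide

theorem exRoutes_nodup : ∀ u v : Fin 7, u ≠ v → ∀ i, (u :: exRoutes u v i).Nodup := by
  decide

theorem exRoutes_edges_disjoint : ∀ u v : Fin 7, u ≠ v → ∀ i j, i ≠ j →
    ∀ e ∈ chainEdges u (exRoutes u v i), e ∉ chainEdges u (exRoutes u v j) := by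
  decide

theorem exRoutes_internallyDisjoint : ∀ u v : Fin 7, u ≠ v →
    ∀ x ∈ u :: exRoutes u v 0, x ∈ u :: exRoutes u v 1 → x = u ∨ x = v := by
  decide

theorem exGraph_exists_three_paths (u v : Fin 7) (huv : u ≠ v) :
    ∃ P : Fin 3 → exGraph.Walk u v, (∀ i, (P i).IsPath) ∧
      (∀ i j, i ≠ j → EdgeDisjoint (P i) (P j)) ∧
      ∃ i j, i ≠ j ∧ InternallyDisjoint (P i) (P j) := by
  let P i := Walk.ofVertexChain (fun _ => rfl) u _ v (exRoutes_isVertexChain u v huv i)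
  have hsupp i : (P i).support = u :: exRoutes u v i := Walk.support_ofVertexChain _ _ _ _ _
  have hedges i : (P i).edges = chainEdges u (exRoutes u v i) :=
    Walk.edges_ofVertexChain _ _ _ _ _
  refine ⟨P, fun i => ?_, fun i j hij => ?_, 0, 1, by decide, ?_⟩
  · simpa only [Walk.IsPath, hsupp] using exRoutes_nodup u v huv i
  · simpa only [EdgeDisjoint, hedges] using exRoutes_edges_disjoint u v huv i j hij
  · simpa only [InternallyDisjoint, hsupp] using exRoutes_internallyDisjoint u v huv

open Multigraph in
/-- In the counterexample graph, deleting the vertex `x₁ = 0` and the edge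
`x₂x₅ = s(1, 4)` disconnects the graph; nevertheless between any two distinct vertices
there are three edge-disjoint paths of which two are internally disjoint. -/
theorem counterexample_has_paths :
    (∃ u v : Fin 7, u ≠ 0 ∧ v ≠ 0 ∧
      ¬ ∃ p : exGraph.Walk u v, (∀ x ∈ p.support, x ≠ (0 : Fin 7)) ∧
        ∀ e ∈ p.edges, e ≠ s((1 : Fin 7), (4 : Fin 7))) ∧
    ∀ u v : Fin 7, u ≠ v →
      ∃ P : Fin 3 → exGraph.Walk u v, (∀ i, (P i).IsPath) ∧
        (∀ i j, i ≠ j → EdgeDisjoint (P i) (P j)) ∧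
        ∃ i j, i ≠ j ∧ InternallyDisjoint (P i) (P j) :=
  ⟨⟨1, 4, by decide, by decide, fun ⟨p, hp⟩ => exGraph_deletion_disconnects p hp⟩,
    exGraph_exists_three_paths⟩
end

section
/- Let s and t be two distinct vertices of a graph G and let l ≥ 1 be an integer. If (1,l) is a connectivity pair for s and t in G, then G contains l+1 edge-disjoint s-t paths of which two are internally disjoint. -/
namespace Multigraph

variable {V E : Type}

/-- There are `k + l` pairwise edge-disjoint `s`-`t` paths in `G` of which `k + 1`
are pairwise internally disjoint. -/
def HasGoodPaths (G : Multigraph V E) (s t : V) (k l : ℕ) : Prop :=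
  ∃ P : Fin (k + l) → G.Walk s t,
    (∀ i, (P i).IsPath) ∧
    (∀ i j, i ≠ j → EdgeDisjoint (P i) (P j)) ∧
    ∃ S : Finset (Fin (k + l)), S.card = k + 1 ∧
      ∀ i ∈ S, ∀ j ∈ S, i ≠ j → InternallyDisjoint (P i) (P j)

end Multigraph

/-!
Split every vertex `v ≠ s, t` into an entry and an exit node joined by `l` parallel arcs, and
replace every edge by two opposite arcs. At most `l` arcs contain all copies of at most one
vertex, so together with the edges they meet they would give a disconnecting pair of order at most
`1`, size at most `l` and cardinality less than `1 + l`; hence no `l` arcs separate `s` from `t`,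
and max-flow min-cut yields a flow of value `l + 1`, which after cancelling opposite arcs uses
every edge at most once. Split it into `l + 1` arc-disjoint walks. Each vertex carries at most `l`
of them, so in the part of the flow that keeps a single copy per vertex no arc separates `s` from
`t`, and a flow of value `2` there consists of two walks without common vertices. The rest of the
flow splits into `l - 1` further walks, and shortcutting all `l + 1` walks gives the paths.
-/

open Finset

theorem pairwise_disjoint_finAppend {α : Type*} {m n : ℕ} {T₁ : Fin m → List α}
    {T₂ : Fin n → List α} (h₁ : Pairwise fun i j => (T₁ i).Disjoint (T₁ j))
    (h₂ : Pairwise fun i j => (T₂ i).Disjoint (T₂ j)) (h : ∀ i j, (T₁ i).Disjoint (T₂ j)) :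
    Pairwise fun i j => (Fin.append T₁ T₂ i).Disjoint (Fin.append T₁ T₂ j) := by
  intro i j hij
  induction i using Fin.addCases <;> induction j using Fin.addCases <;>
    simp only [Fin.append_left, Fin.append_right]
  · exact h₁ fun h => hij (h ▸ rfl)
  · exact h _ _
  · exact (h _ _).symm
  · exact h₂ fun h => hij (h ▸ rfl)

theorem exists_forall_notMem_of_card_lt {α : Type*} {n : ℕ} {T : Fin n → List α}
    (hT : Pairwise fun i j => (T i).Disjoint (T j)) {B : Finset α} (hB : #B < n) :
    ∃ i, ∀ a ∈ T i, a ∉ B := by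
  by_contra! h
  choose φ hφT hφB using h
  have := card_le_card_of_injOn φ (s := univ) (fun i _ => hφB i)
    (fun i _ j _ hij => by_contra fun hne => hT hne (hφT i) (hij ▸ hφT j))
  simp only [card_univ, Fintype.card_fin] at this
  omega

structure Network (N A : Type) where
  src : A → N
  tgt : A → N

namespace Network

variable {N A : Type} (D : Network N A)

inductive IsWalk (S : Set A) : N → List A → N → Prop
  | nil (v : N) : IsWalk S v [] v
  | cons {u w : N} {a : A} {L : List A} (ha : a ∈ S) (hu : D.src a = u)
      (p : IsWalk S (D.tgt a) L w) : IsWalk S u (a :: L) w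

/-- `(a, true)` traverses the arc `a` forwards and `(a, false)` backwards; `residualArcs S f`
allows the former for the arcs of `S` outside the flow `f` and the latter for the arcs of `f`. -/
def residual : Network N (A × Bool) where
  src x := if x.2 then D.src x.1 else D.tgt x.1
  tgt x := if x.2 then D.tgt x.1 else D.src x.1

def residualArcs (S : Set A) (f : Finset A) : Set (A × Bool) :=
  {x | if x.2 then x.1 ∈ S ∧ x.1 ∉ f else x.1 ∈ f}

def excess [DecidableEq N] (f : Finset A) (v : N) : ℤ :=
  #{a ∈ f | D.src a = v} - #{a ∈ f | D.tgt a = v}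

/-- All arcs have capacity `1`, so a flow is a set of arcs. -/
def IsFlow [DecidableEq N] (σ τ : N) (f : Finset A) (m : ℕ) : Prop :=
  ∀ v, D.excess f v = (if v = σ then (m : ℤ) else 0) - if v = τ then (m : ℤ) else 0

variable {D} {S S' : Set A} {u v w σ τ : N} {L L₁ L₂ : List A}

namespace IsWalk

theorem mem (p : D.IsWalk S u L w) {a : A} (ha : a ∈ L) : a ∈ S := by
  induction p with
  | nil => simp at ha
  | cons hb _ _ ih =>
    rcases List.mem_cons.1 ha with rfl | ha
    exacts [hb, ih ha]

theorem mono (p : D.IsWalk S u L w) (h : S ⊆ S') : D.IsWalk S' u L w := by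
  induction p with
  | nil v => exact .nil v
  | cons ha hu _ ih => exact .cons (h ha) hu ih

theorem append (p₁ : D.IsWalk S u L₁ v) (p₂ : D.IsWalk S v L₂ w) :
    D.IsWalk S u (L₁ ++ L₂) w := by
  induction p₁ with
  | nil => exact p₂
  | cons ha hu _ ih => exact .cons ha hu (ih p₂)

theorem of_append (p : D.IsWalk S u (L₁ ++ L₂) w) :
    ∃ v, D.IsWalk S u L₁ v ∧ D.IsWalk S v L₂ w := by
  induction L₁ generalizing u with
  | nil => exact ⟨u, .nil u, p⟩
  | cons a L₁ ih =>
    obtain _ | ⟨ha, hu, p⟩ := p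
    obtain ⟨v, p₁, p₂⟩ := ih p
    exact ⟨v, .cons ha hu p₁, p₂⟩

theorem map {φ : A → A} (hsrc : ∀ a, D.src (φ a) = D.src a)
    (htgt : ∀ a, D.tgt (φ a) = D.tgt a) (hS : Set.MapsTo φ S S') (p : D.IsWalk S u L w) :
    D.IsWalk S' u (L.map φ) w := by
  induction p with
  | nil v => exact .nil v
  | cons ha hu _ ih => exact .cons (hS ha) (by rw [hsrc, hu]) (by rwa [htgt])

theorem exists_nodup (p : D.IsWalk S u L w) : ∃ L', D.IsWalk S u L' w ∧ L'.Nodup := by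
  induction p with
  | nil v => exact ⟨[], .nil v, List.nodup_nil⟩
  | @cons u w a L ha hu _ ih =>
    obtain ⟨L', p', hL'⟩ := ih
    by_cases haL' : a ∈ L'
    · obtain ⟨X, Y, rfl⟩ := List.append_of_mem haL'
      obtain ⟨_, -, p''⟩ := p'.of_append
      obtain _ | ⟨-, -, pY⟩ := p''
      exact ⟨a :: Y, .cons ha hu pY, hL'.sublist (List.sublist_append_right X _)⟩
    · exact ⟨a :: L', .cons ha hu p', List.nodup_cons.2 ⟨haL', hL'⟩⟩

theorem exists_mem_leaving (p : D.IsWalk S u L w) (P : N → Prop) (hu : P u) (hw : ¬ P w) :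
    ∃ a ∈ L, P (D.src a) ∧ ¬ P (D.tgt a) := by
  induction p with
  | nil => exact absurd hu hw
  | @cons u w a L _ hau _ ih =>
    by_cases ht : P (D.tgt a)
    · obtain ⟨b, hb, hPb⟩ := ih ht hw
      exact ⟨b, List.mem_cons_of_mem a hb, hPb⟩
    · exact ⟨a, List.mem_cons_self, hau ▸ hu, ht⟩

end IsWalk

section Flow

variable [DecidableEq N]

@[simp] theorem excess_empty : D.excess ∅ v = 0 := by simp [excess]

theorem IsFlow.exists_src_eq_iff {f : Finset A} {m : ℕ} (hf : D.IsFlow σ τ f m) (hσ : v ≠ σ)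
    (hτ : v ≠ τ) : (∃ a ∈ f, D.src a = v) ↔ ∃ a ∈ f, D.tgt a = v := by
  have hv := hf v
  simp only [excess, hσ, hτ, if_false, sub_zero, sub_eq_zero, Nat.cast_inj] at hv
  simp only [← filter_nonempty_iff, ← card_pos, hv]

theorem IsFlow.card_filter_src_sub_card_filter_tgt {f : Finset A} {m : ℕ}
    (hf : D.IsFlow σ τ f m) (P : N → Prop) [DecidablePred P] (hσ : P σ) (hτ : ¬ P τ) :
    (#{a ∈ f | P (D.src a)} : ℤ) - #{a ∈ f | P (D.tgt a)} = m := by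
  set T := (f.image D.src ∪ f.image D.tgt ∪ {σ}).filter P
  have fiberwise (g : A → N) (hg : ∀ a ∈ f, g a ∈ f.image D.src ∪ f.image D.tgt) :
      ∑ v ∈ T, (#{a ∈ f | g a = v} : ℤ) = #{a ∈ f | P (g a)} := by
    simp only [card_filter, Nat.cast_sum]
    rw [sum_comm]
    refine sum_congr rfl fun a ha => ?_
    have hT : g a ∈ T ↔ P (g a) := by
      simp only [T, mem_filter, mem_union_left _ (hg a ha), true_and]
    rw [← Nat.cast_sum, sum_ite_eq]
    simp only [hT]
  calc (#{a ∈ f | P (D.src a)} : ℤ) - #{a ∈ f | P (D.tgt a)} = ∑ v ∈ T, D.excess f v := by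
        simp only [excess, sum_sub_distrib,
          fiberwise D.src fun a ha => mem_union_left _ (mem_image_of_mem _ ha),
          fiberwise D.tgt fun a ha => mem_union_right _ (mem_image_of_mem _ ha)]
    _ = m := by
        rw [sum_congr rfl fun v _ => hf v, sum_sub_distrib, sum_ite_eq', sum_ite_eq']
        simp [T, hσ, hτ]

variable [DecidableEq A]


theorem excess_insert {f : Finset A} {a : A} (ha : a ∉ f) :
    D.excess (insert a f) v =
      D.excess f v + (if v = D.src a then 1 else 0) - if v = D.tgt a then 1 else 0 := by
  simp only [excess, filter_insert, eq_comm (a := v)]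
  split_ifs <;> simp [card_insert_of_notMem, ha] <;> ring

theorem excess_erase {f : Finset A} {a : A} (ha : a ∈ f) :
    D.excess (f.erase a) v =
      D.excess f v - (if v = D.src a then 1 else 0) + if v = D.tgt a then 1 else 0 := by
  conv_rhs => rw [← insert_erase ha, excess_insert (notMem_erase a f)]
  ring

theorem excess_sdiff {f g : Finset A} (hgf : g ⊆ f) :
    D.excess (f \ g) v = D.excess f v - D.excess g v := by
  have split (g' : A → N) :
      #{a ∈ f \ g | g' a = v} + #{a ∈ g | g' a = v} = #{a ∈ f | g' a = v} := by
    rw [← card_union_of_disjoint (disjoint_filter_filter sdiff_disjoint), ← filter_union,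
      sdiff_union_of_subset hgf]
  simp only [excess]
  have := split D.src
  have := split D.tgt
  omega

theorem IsWalk.excess_toFinset (p : D.IsWalk S u L w) (hL : L.Nodup) :
    D.excess L.toFinset v = (if v = u then 1 else 0) - if v = w then 1 else 0 := by
  induction p with
  | nil => simp
  | cons _ hu _ ih =>
    rw [List.nodup_cons] at hL
    rw [List.toFinset_cons, excess_insert (by simpa using hL.1), ih hL.2, hu]
    split_ifs <;> ring

theorem IsWalk.isFlow_toFinset (p : D.IsWalk S u L w) (hL : L.Nodup) :
    D.IsFlow u w L.toFinset 1 := fun _ => by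
  simpa using p.excess_toFinset hL

theorem IsFlow.sdiff {f g : Finset A} {m k : ℕ} (hf : D.IsFlow σ τ f (m + k))
    (hg : D.IsFlow σ τ g k) (hgf : g ⊆ f) : D.IsFlow σ τ (f \ g) m := fun v => by
  rw [excess_sdiff hgf, hf v, hg v]
  split_ifs <;> push_cast <;> ring

theorem exists_walk_of_excess_pos {f : Finset A} (hu : 0 < D.excess f u) :
    ∃ L w, D.IsWalk (↑f) u L w ∧ L.Nodup ∧ D.excess f w < 0 := by
  induction f using Finset.strongInduction generalizing u with
  | _ f ih =>
    obtain ⟨a, haf, hau⟩ : ∃ a ∈ f, D.src a = u := by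
      by_contra! h
      simp [excess, filter_eq_empty_iff.2 h] at hu
      omega
    by_cases hv : D.excess f (D.tgt a) < 0
    · exact ⟨[a], _, .cons (by simpa) hau (.nil _), List.nodup_singleton a, hv⟩
    have hv' : 0 < D.excess (f.erase a) (D.tgt a) := by
      rw [excess_erase haf, hau, if_pos rfl]
      split_ifs with h <;> (try subst h) <;> omega
    obtain ⟨L, w, p, hL, hw⟩ := ih _ (erase_ssubset haf) hv'
    refine ⟨a :: L, w, .cons (by simpa) hau (p.mono (by simp)), ?_, ?_⟩
    · exact List.nodup_cons.2 ⟨fun h => by simpa using p.mem h, hL⟩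
    · rw [excess_erase haf, hau] at hw
      split_ifs at hw with h <;> (try subst h) <;> omega

theorem IsFlow.exists_walk {f : Finset A} {m : ℕ} (hf : D.IsFlow σ τ f (m + 1)) (hστ : σ ≠ τ) :
    ∃ L, D.IsWalk (↑f) σ L τ ∧ L.Nodup := by
  obtain ⟨L, w, p, hL, hw⟩ := exists_walk_of_excess_pos (f := f) (u := σ) (by rw [hf σ]; simp [hστ])
  obtain rfl : w = τ := by
    by_contra h
    rw [hf w, if_neg h] at hw
    split_ifs at hw <;> omega
  exact ⟨L, p, hL⟩

theorem IsFlow.decompose {f : Finset A} {m : ℕ} (hf : D.IsFlow σ τ f m) (hστ : σ ≠ τ) :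
    ∃ T : Fin m → List A,
      (∀ i, D.IsWalk (↑f) σ (T i) τ) ∧ Pairwise fun i j => (T i).Disjoint (T j) := by
  induction m generalizing f with
  | zero => exact ⟨Fin.elim0, fun i => i.elim0, fun i => i.elim0⟩
  | succ m ih =>
    obtain ⟨L, p, hL⟩ := hf.exists_walk hστ
    have hLf : L.toFinset ⊆ f := fun a ha => by simpa using p.mem (List.mem_toFinset.1 ha)
    obtain ⟨T, hT, hTd⟩ := ih (hf.sdiff (p.isFlow_toFinset hL) hLf)
    refine ⟨Fin.append T ![L], fun i => ?_, pairwise_disjoint_finAppend hTd ?_ ?_⟩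
    · induction i using Fin.addCases
      · simpa using (hT _).mono (by simp)
      · simpa using p
    · exact fun i j hij => absurd (Subsingleton.elim i j) hij
    · intro i j a ha haL
      have ha' := (hT i).mem ha
      simp only [Fin.fin_one_eq_zero j, Matrix.cons_val_fin_one] at haL
      simp only [coe_sdiff, Set.mem_sdiff, List.coe_toFinset, Set.mem_ofPred_eq] at ha'
      exact ha'.2 haL

theorem exists_augment {f : Finset A} (hfS : ↑f ⊆ S) {L : List (A × Bool)}
    (p : D.residual.IsWalk (residualArcs S f) u L w) (hL : L.Nodup) :
    ∃ f' : Finset A, ↑f' ⊆ S ∧ (∀ a, (a, true) ∉ L → (a, false) ∉ L → (a ∈ f' ↔ a ∈ f)) ∧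
      ∀ v, D.excess f' v = D.excess f v + (if v = u then 1 else 0) - if v = w then 1 else 0 := by
  induction p with
  | nil v => exact ⟨f, hfS, fun _ _ _ => Iff.rfl, fun _ => by ring⟩
  | @cons u w x L hx hu p ih =>
    obtain ⟨hxL, hL⟩ := List.nodup_cons.1 hL
    obtain ⟨f₁, hf₁S, hf₁, hex⟩ := ih hL
    have hf₁' (b : A) (h₁ : (b, true) ∉ x :: L) (h₂ : (b, false) ∉ x :: L) :
        b ∈ f₁ ↔ b ∈ f :=
      hf₁ b (fun h => h₁ (List.mem_cons_of_mem x h)) (fun h => h₂ (List.mem_cons_of_mem x h))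
    subst hu
    rcases x with ⟨a, _ | _⟩
    · simp only [residualArcs, residual, Set.mem_ofPred_eq, Bool.false_eq_true, if_false]
        at hx hex ⊢
      have ha : a ∈ f₁ := (hf₁ a (fun h => by simpa [residualArcs, hx] using p.mem h) hxL).2 hx
      refine ⟨f₁.erase a, fun b hb => hf₁S (mem_of_mem_erase hb), fun b h₁ h₂ => ?_, fun v => ?_⟩
      · have hba : b ≠ a := by rintro rfl; simp at h₂
        rw [mem_erase, ← hf₁' b h₁ h₂]
        exact and_iff_right hba
      · rw [excess_erase ha, hex]
        split_ifs <;> ring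
    · simp only [residualArcs, residual, Set.mem_ofPred_eq, if_true] at hx hex ⊢
      have ha : a ∉ f₁ := by
        rw [hf₁ a hxL fun h => by simpa [residualArcs, hx.2] using p.mem h]
        exact hx.2
      refine ⟨insert a f₁, ?_, fun b h₁ h₂ => ?_, fun v => ?_⟩
      · simpa [Set.insert_subset_iff] using ⟨hx.1, hf₁S⟩
      · have hba : b ≠ a := by rintro rfl; simp at h₁
        rw [mem_insert, ← hf₁' b h₁ h₂]
        exact or_iff_right hba
      · rw [excess_insert ha, hex]
        split_ifs <;> ring

theorem IsFlow.augment {f : Finset A} {m : ℕ} (hf : D.IsFlow σ τ f m) (hfS : ↑f ⊆ S)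
    (hτ : ∃ L, D.residual.IsWalk (residualArcs S f) σ L τ) :
    ∃ f', ↑f' ⊆ S ∧ D.IsFlow σ τ f' (m + 1) := by
  obtain ⟨_, p⟩ := hτ
  obtain ⟨L, p, hL⟩ := p.exists_nodup
  obtain ⟨f', hf'S, -, hex⟩ := exists_augment hfS p hL
  refine ⟨f', hf'S, fun v => ?_⟩
  rw [hex, hf v]
  split_ifs <;> push_cast <;> ring

theorem exists_isFlow_of_forall_exists_walk {n : ℕ}
    (H : ∀ F : Finset A, ↑F ⊆ S → #F ≤ n → ∃ L, D.IsWalk S σ L τ ∧ ∀ a ∈ L, a ∉ F) :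
    ∃ f, ↑f ⊆ S ∧ D.IsFlow σ τ f (n + 1) := by
  classical
  suffices ∀ k ≤ n + 1, ∃ f, ↑f ⊆ S ∧ D.IsFlow σ τ f k from this _ le_rfl
  intro k hk
  induction k with
  | zero => exact ⟨∅, by simp, fun v => by simp⟩
  | succ k ih =>
    obtain ⟨f, hfS, hf⟩ := ih (by omega)
    let R v := ∃ L, D.residual.IsWalk (residualArcs S f) σ L v
    have hσ : R σ := ⟨[], .nil σ⟩
    by_cases hτ : R τ
    · exact hf.augment hfS hτ
    have hext {a : A} (b : Bool) (ha : (a, b) ∈ residualArcs S f)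
        (hR : R (D.residual.src (a, b))) : R (D.residual.tgt (a, b)) := by
      obtain ⟨L, p⟩ := hR
      exact ⟨L ++ [(a, b)], p.append (.cons ha rfl (.nil _))⟩
    have hcut := hf.card_filter_src_sub_card_filter_tgt R hσ hτ
    have hback : {a ∈ f | R (D.tgt a)} ⊆ {a ∈ f | R (D.src a)} := fun a ha =>
      mem_filter.2 ⟨(mem_filter.1 ha).1, hext false (mem_filter.1 ha).1 (mem_filter.1 ha).2⟩
    obtain ⟨L, p, hLC⟩ := H ({a ∈ f | R (D.src a)} \ {a ∈ f | R (D.tgt a)})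
      (fun a ha => hfS (mem_filter.1 (mem_sdiff.1 ha).1).1)
      (by rw [card_sdiff_of_subset hback]; omega)
    obtain ⟨a, haL, hsrc, htgt⟩ := p.exists_mem_leaving R hσ hτ
    have haf : a ∈ f := by_contra fun haf => htgt (hext true ⟨p.mem haL, haf⟩ hsrc)
    exact (hLC a haL
      (mem_sdiff.2 ⟨mem_filter.2 ⟨haf, hsrc⟩, fun h => htgt (mem_filter.1 h).2⟩)).elim

end Flow

end Network

namespace Multigraph

variable {V E : Type} {G : Multigraph V E}

namespace Walk

theorem exists_suffix {u w : V} (p : G.Walk u w) {x : V} (hx : x ∈ p.support) :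
    ∃ q : G.Walk x w, q.edges <:+ p.edges ∧ q.support <:+ p.support := by
  induction p with
  | nil =>
    obtain rfl := List.mem_singleton.1 hx
    exact ⟨.nil _, List.suffix_refl _, List.suffix_refl _⟩
  | cons e he huv p ih =>
    rcases List.mem_cons.1 hx with rfl | hx
    · exact ⟨.cons e he huv p, List.suffix_refl _, List.suffix_refl _⟩
    · obtain ⟨q, h₁, h₂⟩ := ih hx
      exact ⟨q, h₁.trans (List.suffix_cons _ _), h₂.trans (List.suffix_cons _ _)⟩

theorem exists_isPath {u w : V} (p : G.Walk u w) :
    ∃ q : G.Walk u w, q.IsPath ∧ q.edges ⊆ p.edges ∧ q.support ⊆ p.support := by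
  induction p with
  | nil v => exact ⟨.nil v, List.nodup_singleton v, .refl _, .refl _⟩
  | @cons u v w e he huv p ih =>
    obtain ⟨q, hq, hqe, hqs⟩ := ih
    by_cases hu : u ∈ q.support
    · obtain ⟨r, h₁, h₂⟩ := exists_suffix q hu
      exact ⟨r, hq.sublist h₂.sublist,
        List.Subset.trans h₁.subset (List.Subset.trans hqe (List.subset_cons_self _ _)),
        List.Subset.trans h₂.subset (List.Subset.trans hqs (List.subset_cons_self _ _))⟩
    · exact ⟨.cons e he huv q, List.nodup_cons.2 ⟨hu, hq⟩, List.cons_subset_cons _ hqe,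
        List.cons_subset_cons _ hqs⟩

end Walk

/-- Arcs of the split network of a multigraph: `inl (v, i)` is the `i`-th parallel arc from the
entry node `(v, false)` of `v` to its exit node `(v, true)`, and `inr (e, u, w)` traverses the
edge `e` from the exit node of `u` to the entry node of `w`. -/
abbrev SplitArc (V E : Type) : Type := (V × ℕ) ⊕ (E × V × V)

def splitNet (V E : Type) : Network (V × Bool) (SplitArc V E) where
  src a := Sum.elim (fun x => (x.1, false)) (fun x => (x.2.1, true)) a
  tgt a := Sum.elim (fun x => (x.1, true)) (fun x => (x.2.2, false)) a

/-- Every vertex other than `s` and `t` gets capacity `l`, and every edge capacity `1` in each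
direction. -/
def splitArcs (G : Multigraph V E) (s t : V) (l : ℕ) : Set (SplitArc V E) :=
  {a | Sum.elim (fun x => x.1 ≠ s ∧ x.1 ≠ t ∧ x.2 < l)
    (fun x => x.1 ∈ G.edgeSet ∧ G.ends x.1 = s(x.2.1, x.2.2)) a}

variable {s t : V} {l : ℕ}

@[simp] theorem splitNet_src_inl (x : V × ℕ) : (splitNet V E).src (.inl x) = (x.1, false) := rfl
@[simp] theorem splitNet_tgt_inl (x : V × ℕ) : (splitNet V E).tgt (.inl x) = (x.1, true) := rfl
@[simp] theorem splitNet_src_inr (x : E × V × V) : (splitNet V E).src (.inr x) = (x.2.1, true) :=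
  rfl
@[simp] theorem splitNet_tgt_inr (x : E × V × V) :
    (splitNet V E).tgt (.inr x) = (x.2.2, false) := rfl

@[simp] theorem inl_mem_splitArcs {v : V} {i : ℕ} :
    .inl (v, i) ∈ G.splitArcs s t l ↔ v ≠ s ∧ v ≠ t ∧ i < l := Iff.rfl
@[simp] theorem inr_mem_splitArcs {e : E} {u w : V} :
    .inr (e, u, w) ∈ G.splitArcs s t l ↔ e ∈ G.edgeSet ∧ G.ends e = s(u, w) := Iff.rfl

theorem exists_walk_of_isWalk {S : Set (SplitArc V E)} (hS : S ⊆ G.splitArcs s t l)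
    {z : V × Bool} {L : List (SplitArc V E)} (p : (splitNet V E).IsWalk S z L (t, false)) :
    ∃ q : G.Walk z.1 t, (∀ e ∈ q.edges, ∃ u w, .inr (e, u, w) ∈ L) ∧
      ∀ v ∈ q.support, v = t ∨ (z.2 = true ∧ v = z.1) ∨ ∃ i, .inl (v, i) ∈ L := by
  generalize hτ : (t, false) = τ at p
  induction p with
  | nil => subst hτ; exact ⟨.nil t, by simp [Walk.edges], by simp [Walk.support]⟩
  | @cons z w a L ha hz p ih =>
    obtain ⟨q, hqe, hqs⟩ := ih hτ
    subst hz
    rcases a with ⟨v, i⟩ | ⟨e, u, w⟩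
    · refine ⟨q, fun e he => ?_, fun x hx => ?_⟩
      · obtain ⟨u, w, h⟩ := hqe e he
        exact ⟨u, w, List.mem_cons_of_mem _ h⟩
      · rcases hqs x hx with h | ⟨-, rfl⟩ | ⟨j, h⟩
        · exact .inl h
        · exact .inr (.inr ⟨i, List.mem_cons_self⟩)
        · exact .inr (.inr ⟨j, List.mem_cons_of_mem _ h⟩)
    · have ⟨he, hends⟩ := hS ha
      refine ⟨.cons e he hends q, fun e' he' => ?_, fun x hx => ?_⟩
      · rcases List.mem_cons.1 he' with rfl | he'
        · exact ⟨u, w, List.mem_cons_self⟩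
        · obtain ⟨u', w', h⟩ := hqe e' he'
          exact ⟨u', w', List.mem_cons_of_mem _ h⟩
      · rcases List.mem_cons.1 hx with rfl | hx
        · exact .inr (.inl ⟨rfl, rfl⟩)
        · rcases hqs x hx with h | ⟨h, -⟩ | ⟨j, h⟩
          · exact .inl h
          · simp at h
          · exact .inr (.inr ⟨j, List.mem_cons_of_mem _ h⟩)

theorem exists_isPath_of_isWalk {S : Set (SplitArc V E)} (hS : S ⊆ G.splitArcs s t l)
    {L : List (SplitArc V E)} (p : (splitNet V E).IsWalk S (s, true) L (t, false)) :
    ∃ q : G.Walk s t, q.IsPath ∧ (∀ e ∈ q.edges, ∃ u w, .inr (e, u, w) ∈ L) ∧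
      ∀ v ∈ q.support, v = s ∨ v = t ∨ ∃ i, .inl (v, i) ∈ L := by
  obtain ⟨q, hqe, hqs⟩ := exists_walk_of_isWalk hS p
  obtain ⟨r, hr, hre, hrs⟩ := q.exists_isPath
  refine ⟨r, hr, fun e he => hqe e (hre he), fun v hv => ?_⟩
  rcases hqs v (hrs hv) with h | ⟨-, h⟩ | h
  exacts [.inr (.inl h), .inl h, .inr (.inr h)]

theorem exists_isWalk_of_walk {F : Finset (SplitArc V E)} {u : V} (p : G.Walk u t)
    (hv : ∀ v ∈ p.support, v ≠ t → ∃ i, .inl (v, i) ∈ G.splitArcs s t l ∧ .inl (v, i) ∉ F)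
    (he : ∀ e ∈ p.edges, ∀ x y, .inr (e, x, y) ∉ F) :
    ∃ L, (splitNet V E).IsWalk (G.splitArcs s t l) (u, false) L (t, false) ∧ ∀ a ∈ L, a ∉ F := by
  induction p with
  | nil => exact ⟨[], .nil _, by simp⟩
  | @cons u y w e he' hends p ih =>
    by_cases hu : u = w
    · subst hu; exact ⟨[], .nil _, by simp⟩
    obtain ⟨i, hiS, hiF⟩ := hv u List.mem_cons_self hu
    obtain ⟨L, hL, hLF⟩ := ih (fun v hv' => hv v (List.mem_cons_of_mem _ hv'))
      (fun e' he'' => he e' (List.mem_cons_of_mem _ he''))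
    refine ⟨.inl (u, i) :: .inr (e, u, y) :: L, .cons hiS rfl (.cons ⟨he', hends⟩ rfl hL), ?_⟩
    simp only [List.mem_cons, forall_eq_or_imp]
    exact ⟨hiF, he e List.mem_cons_self u y, hLF⟩

theorem exists_isWalk_of_isPath (hst : s ≠ t) {F : Finset (SplitArc V E)} {p : G.Walk s t}
    (hp : p.IsPath) (hv : ∀ v ∈ p.support, v ≠ s → v ≠ t → ∃ i < l, .inl (v, i) ∉ F)
    (he : ∀ e ∈ p.edges, ∀ x y, .inr (e, x, y) ∉ F) :
    ∃ L, (splitNet V E).IsWalk (G.splitArcs s t l) (s, true) L (t, false) ∧ ∀ a ∈ L, a ∉ F := by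
  cases p with
  | nil => exact absurd rfl hst
  | @cons _ y _ e he' hends p =>
    have hsp : s ∉ p.support := (List.nodup_cons.1 hp).1
    obtain ⟨L, hL, hLF⟩ := exists_isWalk_of_walk (s := s) (l := l) (F := F) p
      (fun v hv' hvt => by
        have hvs : v ≠ s := by rintro rfl; exact hsp hv'
        obtain ⟨i, hi, hiF⟩ := hv v (List.mem_cons_of_mem _ hv') hvs hvt
        exact ⟨i, ⟨hvs, hvt, hi⟩, hiF⟩)
      (fun e' he'' => he e' (List.mem_cons_of_mem _ he''))
    refine ⟨.inr (e, s, y) :: L, .cons ⟨he', hends⟩ rfl hL, ?_⟩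
    simp only [List.mem_cons, forall_eq_or_imp]
    exact ⟨he e List.mem_cons_self s y, hLF⟩

theorem ConnectivityPair.exists_walk_avoiding (hl : 1 ≤ l) (h : G.ConnectivityPair s t 1 l)
    {W : Finset V} {FE : Finset E} (hW : ↑W ⊆ ({s, t} : Set V)ᶜ) (hFE : ↑FE ⊆ G.edgeSet)
    (hcard : #W * l + #FE ≤ l) :
    ∃ p : G.Walk s t, (∀ x ∈ p.support, x ∉ W) ∧ ∀ e ∈ p.edges, e ∉ FE := by
  have hW₁ : #W ≤ 1 := by
    by_contra! hW₁
    nlinarith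
  by_contra! hdis
  refine h.2 ⟨W, FE, ⟨hW, hFE, fun p => ?_⟩, ?_, hW₁, by nlinarith⟩
  · by_cases hp : ∃ x ∈ p.support, x ∈ W
    · exact .inl hp
    · exact .inr (hdis p (by simpa using hp))
  · rcases Nat.le_one_iff_eq_zero_or_eq_one.1 hW₁ with h₀ | h₁
    · omega
    · rw [h₁] at hcard ⊢
      omega

def UsesEdgesOnce (f : Finset (SplitArc V E)) : Prop :=
  ∀ e u w u' w', .inr (e, u, w) ∈ f → .inr (e, u', w') ∈ f → u = u' ∧ w = w'

noncomputable def leastCopy (f : Finset (SplitArc V E)) : SplitArc V E → SplitArc V E :=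
  Sum.elim (fun x => .inl (x.1, sInf {j | .inl (x.1, j) ∈ f})) .inr

theorem leastCopy_mem {f : Finset (SplitArc V E)} {a : SplitArc V E} (ha : a ∈ f) :
    leastCopy f a ∈ f := by
  rcases a with ⟨v, i⟩ | x
  exacts [Nat.sInf_mem (s := {j | (.inl (v, j) : SplitArc V E) ∈ f}) ⟨i, ha⟩, ha]

section SplitFlow

variable [DecidableEq V] {f : Finset (SplitArc V E)} {m : ℕ}

theorem forall_exists_isWalk_avoiding [DecidableEq E] (hst : s ≠ t) (hl : 1 ≤ l)
    (h : G.ConnectivityPair s t 1 l) (F : Finset (SplitArc V E)) (hFS : ↑F ⊆ G.splitArcs s t l)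
    (hF : #F ≤ l) :
    ∃ L, (splitNet V E).IsWalk (G.splitArcs s t l) (s, true) L (t, false) ∧ ∀ a ∈ L, a ∉ F := by
  set W : Finset V := {v ∈ F.toLeft.image Prod.fst | v ≠ s ∧ v ≠ t ∧ ∀ i < l, (v, i) ∈ F.toLeft}
  set FE : Finset E := F.toRight.image Prod.fst
  have hWl : #W * l ≤ #F.toLeft := by
    rw [← card_range l, ← card_product]
    refine card_le_card fun x hx => ?_
    obtain ⟨hv, hi⟩ := mem_product.1 hx
    exact (mem_filter.1 hv).2.2.2 _ (mem_range.1 hi)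
  have hFE : #FE ≤ #F.toRight := card_image_le
  obtain ⟨p, hpW, hpF⟩ := h.exists_walk_avoiding hl (W := W) (FE := FE)
    (fun v hv => by obtain ⟨-, hvs, hvt, -⟩ := mem_filter.1 hv; simp [hvs, hvt])
    (fun e he => by
      obtain ⟨⟨e, u, w⟩, hx, rfl⟩ := mem_image.1 he
      exact (hFS (mem_toRight.1 hx)).1)
    (by have := card_toLeft_add_card_toRight (u := F); omega)
  obtain ⟨q, hq, hqe, hqs⟩ := p.exists_isPath
  refine exists_isWalk_of_isPath hst hq (fun v hv hvs hvt => ?_)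
    fun e he x y hxy => hpF e (hqe he) (mem_image.2 ⟨(e, x, y), mem_toRight.2 hxy, rfl⟩)
  by_contra! hall
  refine hpW v (hqs hv) (mem_filter.2 ⟨mem_image.2 ⟨(v, 0), mem_toLeft.2 (hall 0 hl), rfl⟩,
    hvs, hvt, fun i hi => mem_toLeft.2 (hall i hi)⟩)

theorem ne_of_inr_mem (hst : s ≠ t) (hfS : ↑f ⊆ G.splitArcs s t l)
    (hf : (splitNet V E).IsFlow (s, true) (t, false) f m) {e : E} {x y : V}
    (hx : .inr (e, x, y) ∈ f) : x ≠ t := by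
  rintro rfl
  obtain ⟨a, ha, hta⟩ := (hf.exists_src_eq_iff (v := (x, true)) (by simpa using hst.symm)
    (by simp)).1 ⟨_, hx, rfl⟩
  rcases a with ⟨v, i⟩ | ⟨e', u, w⟩ <;> simp only [splitNet_tgt_inl, splitNet_tgt_inr,
    Prod.mk.injEq, Bool.false_eq_true, and_false, and_true] at hta
  exact (hfS ha).2.1 hta

theorem exists_inl_mem_of_inr_mem (hf : (splitNet V E).IsFlow (s, true) (t, false) f m)
    {e : E} {x y : V} (hx : .inr (e, x, y) ∈ f) (hy : y ≠ t) : ∃ j, .inl (y, j) ∈ f := by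
  obtain ⟨a, ha, hsa⟩ := (hf.exists_src_eq_iff (v := (y, false)) (by simp) (by simpa using hy)).2
    ⟨_, hx, rfl⟩
  rcases a with ⟨v, i⟩ | ⟨e', u, w⟩ <;> simp only [splitNet_src_inl, splitNet_src_inr,
    Prod.mk.injEq, Bool.true_eq_false, and_false, and_true] at hsa
  exact ⟨i, hsa ▸ ha⟩

/-- A flow that uses an edge in both directions contains a cycle through the two arcs; removing
it leaves a smaller flow of the same value. -/
theorem exists_isFlow_usesEdgesOnce [DecidableEq E] (hst : s ≠ t) (hfS : ↑f ⊆ G.splitArcs s t l)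
    (hf : (splitNet V E).IsFlow (s, true) (t, false) f m) :
    ∃ f', ↑f' ⊆ G.splitArcs s t l ∧ (splitNet V E).IsFlow (s, true) (t, false) f' m ∧
      UsesEdgesOnce f' := by
  induction f using Finset.strongInduction with
  | _ f ih =>
  by_cases hfe : UsesEdgesOnce f
  · exact ⟨f, hfS, hf, hfe⟩
  simp only [UsesEdgesOnce, not_forall] at hfe
  obtain ⟨e, u, w, u', w', h₁, h₂, hne⟩ := hfe
  obtain ⟨he, hends⟩ := inr_mem_splitArcs.1 (hfS h₁)
  obtain ⟨rfl, rfl⟩ : w = u' ∧ u = w' := by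
    have := (inr_mem_splitArcs.1 (hfS h₂)).2
    rw [hends, Sym2.eq_iff] at this
    exact (this.resolve_left hne).symm
  have huw : u ≠ w := fun h => G.no_loops e he (by rw [hends, h]; exact Sym2.mk_isDiag_iff.2 rfl)
  obtain ⟨j, hj⟩ := exists_inl_mem_of_inr_mem hf h₁ (ne_of_inr_mem hst hfS hf h₂)
  obtain ⟨i, hi⟩ := exists_inl_mem_of_inr_mem hf h₂ (ne_of_inr_mem hst hfS hf h₁)
  set C : List (SplitArc V E) := [.inr (e, u, w), .inl (w, j), .inr (e, w, u), .inl (u, i)]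
  have hC : (splitNet V E).IsWalk (↑f) (u, true) C (u, true) :=
    .cons h₁ rfl (.cons hj rfl (.cons h₂ rfl (.cons hi rfl (.nil _))))
  have hCnd : C.Nodup := by simp [C, huw, huw.symm]
  have hCf : C.toFinset ⊆ f := fun a ha => hC.mem (List.mem_toFinset.1 ha)
  have hcirc : (splitNet V E).IsFlow (s, true) (t, false) C.toFinset 0 := fun v => by
    rw [hC.excess_toFinset hCnd]
    simp
  exact ih _ (sdiff_ssubset hCf (by simp [C])) ((coe_subset.2 sdiff_subset).trans hfS)
    (hf.sdiff hcirc hCf)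

theorem eq_of_inl_mem_image_leastCopy [DecidableEq E] {v : V} {i j : ℕ}
    (hi : .inl (v, i) ∈ f.image (leastCopy f)) (hj : .inl (v, j) ∈ f.image (leastCopy f)) :
    i = j := by
  have key {k : ℕ} (hk : .inl (v, k) ∈ f.image (leastCopy f)) :
      k = sInf {j | .inl (v, j) ∈ f} := by
    obtain ⟨⟨w, _⟩ | _, -, h⟩ := mem_image.1 hk <;>
      simp only [leastCopy, Sum.elim_inl, Sum.elim_inr, Sum.inl.injEq, Prod.mk.injEq,
        reduceCtorEq] at h
    obtain ⟨rfl, rfl⟩ := h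
    rfl
  exact (key hi).trans (key hj).symm

theorem card_filter_leastCopy_eq_le [DecidableEq E] (hl : 1 ≤ l)
    (hfS : ↑f ⊆ G.splitArcs s t l) (x : SplitArc V E) : #{a ∈ f | leastCopy f a = x} ≤ l := by
  rcases x with ⟨v, j⟩ | x
  · refine (card_le_card fun a ha => ?_).trans
      ((card_image_le (f := fun i => (.inl (v, i) : SplitArc V E))).trans (card_range l).le)
    obtain ⟨haf, hax⟩ := mem_filter.1 ha
    rcases a with ⟨w, i⟩ | _ <;> simp only [leastCopy, Sum.elim_inl, Sum.elim_inr, Sum.inl.injEq,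
      Prod.mk.injEq, reduceCtorEq] at hax
    exact mem_image.2 ⟨i, mem_range.2 (hfS haf).2.2, by rw [hax.1]⟩
  · refine (card_le_card fun a ha => ?_).trans ((card_singleton (Sum.inr x)).trans_le hl)
    obtain ⟨-, hax⟩ := mem_filter.1 ha
    rcases a with _ | y <;> simp only [leastCopy, Sum.elim_inl, Sum.elim_inr, Sum.inr.injEq,
      reduceCtorEq] at hax
    exact mem_singleton.2 (congrArg Sum.inr hax)

/-- At most `l` of the `l + 1` arc-disjoint walks pass through any one vertex, so one of them avoids
any given arc after every vertex is redirected to its least copy. -/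
theorem exists_isWalk_leastCopy_avoiding [DecidableEq E] (hl : 1 ≤ l)
    (hfS : ↑f ⊆ G.splitArcs s t l) {T : Fin (l + 1) → List (SplitArc V E)}
    (hT : ∀ i, (splitNet V E).IsWalk (↑f) (s, true) (T i) (t, false))
    (hTd : Pairwise fun i j => (T i).Disjoint (T j)) (F : Finset (SplitArc V E)) (hF : #F ≤ 1) :
    ∃ L, (splitNet V E).IsWalk ↑(f.image (leastCopy f)) (s, true) L (t, false) ∧
      ∀ a ∈ L, a ∉ F := by
  have : Nonempty (SplitArc V E) := ⟨.inl (s, 0)⟩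
  obtain ⟨x, hx⟩ := card_le_one_iff_subset_singleton.1 hF
  have hB : #{a ∈ f | leastCopy f a ∈ F} < l + 1 :=
    Nat.lt_succ_of_le ((card_le_card fun a ha => mem_filter.2
      ⟨(mem_filter.1 ha).1, mem_singleton.1 (hx (mem_filter.1 ha).2)⟩).trans
        (card_filter_leastCopy_eq_le hl hfS x))
  obtain ⟨k, hk⟩ := exists_forall_notMem_of_card_lt hTd hB
  refine ⟨(T k).map (leastCopy f), (hT k).map (fun a => ?_) (fun a => ?_)
    (fun a ha => mem_image_of_mem _ ha), ?_⟩
  · rcases a with _ | _ <;> rfl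
  · rcases a with _ | _ <;> rfl
  · simp only [List.mem_map, forall_exists_index, and_imp, forall_apply_eq_imp_iff₂]
    exact fun a ha haF => hk a ha (mem_filter.2 ⟨(hT k).mem ha, haF⟩)

theorem exists_disjoint_walks_two_vertex_disjoint [DecidableEq E]
    (hfS : ↑f ⊆ G.splitArcs s t (m + 1))
    (hf : (splitNet V E).IsFlow (s, true) (t, false) f (m + 2)) :
    ∃ T : Fin (2 + m) → List (SplitArc V E),
      (∀ i, (splitNet V E).IsWalk (↑f) (s, true) (T i) (t, false)) ∧
      (Pairwise fun i j => (T i).Disjoint (T j)) ∧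
      ∃ i₀ i₁, i₀ ≠ i₁ ∧ ∀ v j₀ j₁, .inl (v, j₀) ∈ T i₀ → .inl (v, j₁) ∈ T i₁ → False := by
  have hστ : ((s, true) : V × Bool) ≠ (t, false) := by simp
  obtain ⟨T, hT, hTd⟩ := hf.decompose hστ
  have hS₂f : f.image (leastCopy f) ⊆ f := image_subset_iff.2 fun a ha => leastCopy_mem ha
  obtain ⟨g, hgS, hg⟩ := (splitNet V E).exists_isFlow_of_forall_exists_walk (n := 1)
    fun F _ hF => exists_isWalk_leastCopy_avoiding (by omega) hfS hT hTd F hF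
  have hgf : g ⊆ f := fun a ha => hS₂f (hgS ha)
  obtain ⟨R, hR, hRd⟩ := hg.decompose hστ
  obtain ⟨P, hP, hPd⟩ := (hf.sdiff hg hgf).decompose hστ
  refine ⟨Fin.append R P, fun i => ?_, pairwise_disjoint_finAppend hRd hPd fun i j a ha ha' => ?_,
    Fin.castAdd m 0, Fin.castAdd m 1, by simp, fun v j₀ j₁ h₀ h₁ => ?_⟩
  · induction i using Fin.addCases <;> simp only [Fin.append_left, Fin.append_right]
    · exact (hR _).mono (coe_subset.2 hgf)
    · exact (hP _).mono (coe_subset.2 sdiff_subset)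
  · exact (mem_sdiff.1 ((hP j).mem ha')).2 ((hR i).mem ha)
  · -- in `f.image (leastCopy f)` each vertex has a single arc, which `R 0` and `R 1` cannot share
    simp only [Fin.append_left] at h₀ h₁
    obtain rfl := eq_of_inl_mem_image_leastCopy (hgS ((hR 0).mem h₀)) (hgS ((hR 1).mem h₁))
    exact hRd (by decide : (0 : Fin 2) ≠ 1) h₀ h₁

end SplitFlow

theorem hasGoodPaths_of_splitWalks {f : Finset (SplitArc V E)} (hfS : ↑f ⊆ G.splitArcs s t l)
    (hfe : UsesEdgesOnce f) {n : ℕ} (hn : n = 1 + l) {T : Fin n → List (SplitArc V E)}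
    (hT : ∀ i, (splitNet V E).IsWalk (↑f) (s, true) (T i) (t, false))
    (hTd : Pairwise fun i j => (T i).Disjoint (T j)) {i₀ i₁ : Fin n} (hi : i₀ ≠ i₁)
    (hvd : ∀ v j₀ j₁, .inl (v, j₀) ∈ T i₀ → .inl (v, j₁) ∈ T i₁ → False) :
    HasGoodPaths G s t 1 l := by
  subst hn
  choose q hq hqe hqs using fun i => exists_isPath_of_isWalk hfS (hT i)
  refine ⟨q, hq, fun i j hij e hei hej => ?_, {i₀, i₁}, card_pair hi, ?_⟩
  · obtain ⟨u, w, hi'⟩ := hqe i e hei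
    obtain ⟨u', w', hj'⟩ := hqe j e hej
    obtain ⟨rfl, rfl⟩ := hfe e u w u' w' ((hT i).mem hi') ((hT j).mem hj')
    exact hTd hij hi' hj'
  have key : InternallyDisjoint (q i₀) (q i₁) := fun v h₀ h₁ => by
    rcases hqs i₀ v h₀ with h | h | ⟨j₀, h₀⟩
    · exact .inl h
    · exact .inr h
    rcases hqs i₁ v h₁ with h | h | ⟨j₁, h₁⟩
    · exact .inl h
    · exact .inr h
    exact (hvd v j₀ j₁ h₀ h₁).elim
  simp only [mem_insert, mem_singleton]
  rintro i (rfl | rfl) j (rfl | rfl) hij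
  · exact absurd rfl hij
  · exact key
  · exact fun v h₁ h₀ => key v h₀ h₁
  · exact absurd rfl hij

end Multigraph

open Multigraph in
/-- If `(1, l)` is a connectivity pair for `s` and `t` with `l ≥ 1`, then there are
`l + 1` edge-disjoint `s`-`t` paths of which two are internally disjoint. -/
theorem connectivity_pair_order_one {V E : Type} (G : Multigraph V E) (s t : V)
    (hst : s ≠ t) (l : ℕ) (hl : 1 ≤ l) (h : G.ConnectivityPair s t 1 l) :
    HasGoodPaths G s t 1 l := by
  classical
  obtain ⟨f₀, hf₀S, hf₀⟩ := (splitNet V E).exists_isFlow_of_forall_exists_walk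
    (forall_exists_isWalk_avoiding hst hl h)
  obtain ⟨f, hfS, hf, hfe⟩ := exists_isFlow_usesEdgesOnce hst hf₀S hf₀
  obtain ⟨m, rfl⟩ : ∃ m, l = m + 1 := ⟨l - 1, by omega⟩
  obtain ⟨T, hT, hTd, i₀, i₁, hi, hvd⟩ := exists_disjoint_walks_two_vertex_disjoint hfS hf
  exact hasGoodPaths_of_splitWalks hfS hfe (by omega) hT hTd hi hvd
end
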